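/- arXiv:1712.04677 — 9 statements merged into one kernel-verified Lean document; each statement's English description precedes it below -/
import Mathlib

section
/- Assume the primal problem defining Jₙ is feasible. Then the duality gap between Jₙ and J̃ₙ is zero: Jₙ = J̃ₙ. If, in addition, there exists γ > 0 such that ‖(y(b₁),…,y(bₙ))‖_{R*} ≥ γ‖y‖_* for every y ∈ 𝕂* and θ_P is large enough that γθ_P > ‖b‖, then every optimizer y* of the dual problem J̃ₙ satisfies ‖y*‖_* ≤ (θ_P‖c‖_{R*} − Jₙ^{LB}) / (γθ_P − ‖b‖) for any lower bound Jₙ^{LB} ≤ Jₙ; in particular ‖y*‖_* ≤ 2θ_P‖c‖_{R*} / (γθ_P − ‖b‖). -/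
/-- The dual norm on `ℝⁿ` induced by a norm `R` and the standard bilinear pairing. -/
noncomputable def dualNormR {n : ℕ} (R : (Fin n → ℝ) → ℝ) (z : Fin n → ℝ) : ℝ :=
  sSup {t | ∃ α : Fin n → ℝ, R α ≤ 1 ∧ t = ∑ i, α i * z i}

/-!
Weak duality is the pairing inequality `α ⬝ᵥ w ≤ θ ‖w‖_{R*}` for `R α ≤ θ`, applied to
`w = (y bᵢ - cᵢ)ᵢ`, together with `y (∑ αᵢ bᵢ - b) ≥ 0` for `y ∈ 𝕂*`.

For strong duality, the ball `{R ≤ θ}` is compact since all norms on `ℝⁿ` are equivalent, so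
`{(∑ αᵢ bᵢ - k, αᵀc) | R α ≤ θ, k ∈ 𝕂}` is closed and convex in `B × ℝ`. For `s < Jₙ` the point
`(b, s)` lies outside it; a Hahn–Banach separating functional `(x, t) ↦ y x + λ t` has `y ∈ 𝕂*`
because `𝕂` is a cone and `λ < 0` by feasibility, and `y / (-λ)` is a dual point of value `≥ s`.

The norm bound combines `γ ‖y‖ ≤ ‖(y bᵢ)ᵢ‖_{R*} ≤ ‖(y bᵢ - cᵢ)ᵢ‖_{R*} + ‖c‖_{R*}` and
`y b ≤ ‖y‖ ‖b‖` with `J^{LB} ≤ Jₙ = J̃ₙ`; the particular case is `J^{LB} = -θ ‖c‖_{R*}`.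
-/

open Set Pointwise

section NormEquivalence

variable {E : Type*} [NormedAddCommGroup E] [NormedSpace ℝ E] [FiniteDimensional ℝ E]

theorem Seminorm.continuous_of_finiteDimensional (p : Seminorm ℝ E) : Continuous p :=
  p.convexOn.locallyLipschitz.continuous

-- `p` attains a positive minimum on the compact unit sphere.
theorem Seminorm.exists_pos_mul_norm_le (p : Seminorm ℝ E) (hp : ∀ x, p x = 0 → x = 0) :
    ∃ m > 0, ∀ x, m * ‖x‖ ≤ p x := by
  rcases subsingleton_or_nontrivial E with hE | hE
  · exact ⟨1, one_pos, fun x => by simp [Subsingleton.elim x 0]⟩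
  obtain ⟨x₀, hx₀, hmin⟩ := (isCompact_sphere (0 : E) 1).exists_isMinOn
    (NormedSpace.sphere_nonempty.2 zero_le_one) p.continuous_of_finiteDimensional.continuousOn
  have hx₀0 : x₀ ≠ 0 := ne_zero_of_mem_unit_sphere ⟨x₀, hx₀⟩
  refine ⟨p x₀, (apply_nonneg p x₀).lt_of_ne' fun h => hx₀0 (hp _ h), fun x => ?_⟩
  rcases eq_or_ne x 0 with rfl | hx
  · simp
  have hxn : 0 < ‖x‖ := norm_pos_iff.2 hx
  have hmem : ‖x‖⁻¹ • x ∈ Metric.sphere (0 : E) 1 := by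
    simp [norm_smul, hxn.ne']
  have : p x₀ ≤ p (‖x‖⁻¹ • x) := hmin hmem
  rw [map_smul_eq_mul, norm_inv, norm_norm, le_inv_mul_iff₀ hxn] at this
  rwa [mul_comm]

theorem Seminorm.isCompact_closedBall_zero (p : Seminorm ℝ E) (hp : ∀ x, p x = 0 → x = 0)
    (r : ℝ) : IsCompact (p.closedBall 0 r) := by
  obtain ⟨m, hm, hle⟩ := p.exists_pos_mul_norm_le hp
  refine (isCompact_closedBall (0 : E) (r / m)).of_isClosed_subset ?_ fun x hx => ?_
  · rw [closedBall_zero_eq]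
    exact isClosed_le p.continuous_of_finiteDimensional continuous_const
  · rw [Seminorm.mem_closedBall_zero] at hx
    rw [mem_closedBall_zero_iff, le_div_iff₀ hm, mul_comm]
    exact (hle x).trans hx

end NormEquivalence

section DualNorm

variable {n : ℕ} (p : Seminorm ℝ (Fin n → ℝ))

theorem dualNormR_eq_sSup_image (z : Fin n → ℝ) :
    dualNormR p z = sSup ((· ⬝ᵥ z) '' p.closedBall 0 1) := by
  unfold dualNormR
  congr 1
  ext t
  simp [dotProduct, eq_comm]

theorem dotProduct_le_dualNormR (hp : ∀ x, p x = 0 → x = 0) {α : Fin n → ℝ} (hα : p α ≤ 1)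
    (z : Fin n → ℝ) : α ⬝ᵥ z ≤ dualNormR p z := by
  rw [dualNormR_eq_sSup_image]
  exact le_csSup ((p.isCompact_closedBall_zero hp 1).bddAbove_image (by fun_prop))
    (mem_image_of_mem _ ((p.mem_closedBall_zero).2 hα))

theorem dotProduct_le_mul_dualNormR (hp : ∀ x, p x = 0 → x = 0) {θ : ℝ} (hθ : 0 < θ)
    {α : Fin n → ℝ} (hα : p α ≤ θ) (z : Fin n → ℝ) : α ⬝ᵥ z ≤ θ * dualNormR p z := by
  have hscaled : p (θ⁻¹ • α) ≤ 1 := by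
    rwa [map_smul_eq_mul, norm_inv, Real.norm_of_nonneg hθ.le, inv_mul_le_one₀ hθ]
  have h := dotProduct_le_dualNormR p hp hscaled z
  rwa [smul_dotProduct, smul_eq_mul, inv_mul_le_iff₀ hθ] at h

theorem neg_mul_dualNormR_le_dotProduct (hp : ∀ x, p x = 0 → x = 0) {θ : ℝ} (hθ : 0 < θ)
    {α : Fin n → ℝ} (hα : p α ≤ θ) (z : Fin n → ℝ) : -(θ * dualNormR p z) ≤ α ⬝ᵥ z := by
  have h := dotProduct_le_mul_dualNormR p hp hθ (α := -α) (by rwa [map_neg_eq_map]) z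
  rw [neg_dotProduct] at h
  linarith

theorem mul_dualNormR_le {θ : ℝ} (hθ : 0 < θ) {z : Fin n → ℝ} {M : ℝ}
    (h : ∀ α, p α ≤ θ → α ⬝ᵥ z ≤ M) : θ * dualNormR p z ≤ M := by
  rw [dualNormR_eq_sSup_image, ← le_div_iff₀' hθ]
  refine csSup_le (Nonempty.image _ ⟨0, by simp⟩) ?_
  rintro _ ⟨β, hβ, rfl⟩
  rw [Seminorm.mem_closedBall_zero] at hβ
  rw [le_div_iff₀' hθ, ← smul_eq_mul, ← smul_dotProduct]
  apply h
  rw [map_smul_eq_mul, Real.norm_of_nonneg hθ.le]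
  exact mul_le_of_le_one_right hθ.le hβ

theorem dualNormR_add_le (hp : ∀ x, p x = 0 → x = 0) (w z : Fin n → ℝ) :
    dualNormR p (w + z) ≤ dualNormR p w + dualNormR p z := by
  simpa using mul_dualNormR_le p one_pos fun α hα => by
    rw [dotProduct_add]
    exact add_le_add (dotProduct_le_dualNormR p hp hα w) (dotProduct_le_dualNormR p hp hα z)

end DualNorm

theorem csSup_eq_csInf_of_forall_exists_le {α : Type*} [ConditionallyCompleteLinearOrder α]
    [DenselyOrdered α] {P Q : Set α} (hP : P.Nonempty) (hQ : Q.Nonempty)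
    (hle : ∀ q ∈ Q, ∀ p ∈ P, q ≤ p) (hgap : ∀ s, (∀ p ∈ P, s < p) → ∃ q ∈ Q, s ≤ q) :
    sSup Q = sInf P := by
  have hQbdd : BddAbove Q := let ⟨p, hp⟩ := hP; ⟨p, fun q hq => hle q hq p hp⟩
  have hPbdd : BddBelow P := let ⟨q, hq⟩ := hQ; ⟨q, hle q hq⟩
  refine le_antisymm (le_csInf hP fun p hp => csSup_le hQ fun q hq => hle q hq p hp) ?_
  refine le_of_forall_lt_imp_le_of_dense fun s hs => ?_
  obtain ⟨q, hq, hsq⟩ := hgap s fun p hp => hs.trans_le (csInf_le hPbdd hp)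
  exact hsq.trans (le_csSup hQbdd hq)

theorem nonneg_of_forall_nonneg_lt_mul {a v : ℝ} (h : ∀ t : ℝ, 0 ≤ t → v < t * a) : 0 ≤ a := by
  by_contra! ha
  have hv : v < 0 := by simpa using h 0 le_rfl
  have := h (v / a) (div_nonneg_of_nonpos hv.le ha.le)
  rw [div_mul_cancel₀ v ha.ne] at this
  exact lt_irrefl v this

section Duality

variable {B : Type*} [NormedAddCommGroup B] [NormedSpace ℝ B] {n : ℕ}
  (b0 : B) (b : Fin n → B) (c : Fin n → ℝ)

noncomputable def dualObjective (R : (Fin n → ℝ) → ℝ) (θ : ℝ) (y : B →L[ℝ] ℝ) : ℝ :=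
  y b0 - θ * dualNormR R (fun i => y (b i) - c i)

variable {b0 b c} (p : Seminorm ℝ (Fin n → ℝ)) (hp : ∀ x, p x = 0 → x = 0) {K : Set B} {θ : ℝ}
include hp

theorem dualObjective_le_dotProduct (hθ : 0 < θ) {y : B →L[ℝ] ℝ} (hy : ∀ v ∈ K, 0 ≤ y v)
    {α : Fin n → ℝ} (hα : p α ≤ θ) (hfeas : ∑ i, α i • b i - b0 ∈ K) :
    dualObjective b0 b c p θ y ≤ α ⬝ᵥ c := by
  have hy0 : y b0 ≤ α ⬝ᵥ (fun i => y (b i)) := by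
    simpa [map_sum, dotProduct] using hy _ hfeas
  have hpair := dotProduct_le_mul_dualNormR p hp hθ hα (fun i => y (b i) - c i)
  simp only [dotProduct, mul_sub, Finset.sum_sub_distrib] at hpair hy0 ⊢
  unfold dualObjective
  linarith

theorem norm_mul_le_of_le_dualObjective (hθ : 0 ≤ θ) {y : B →L[ℝ] ℝ} {γ J : ℝ}
    (hγ : γ * ‖y‖ ≤ dualNormR p (fun i => y (b i))) (hJ : J ≤ dualObjective b0 b c p θ y) :
    ‖y‖ * (γ * θ - ‖b0‖) ≤ θ * dualNormR p c - J := by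
  have htri : dualNormR p (fun i => y (b i)) ≤
      dualNormR p (fun i => y (b i) - c i) + dualNormR p c := by
    convert dualNormR_add_le p hp (fun i => y (b i) - c i) c using 2
    ext i
    simp
  have hyb0 : y b0 ≤ ‖y‖ * ‖b0‖ := (le_abs_self _).trans (y.le_opNorm b0)
  have hθγ := mul_le_mul_of_nonneg_left (hγ.trans htri) hθ
  unfold dualObjective at hJ
  linarith

-- Hahn–Banach separation of `(b0, s)` from `{(∑ αᵢ bᵢ - k, α ⬝ᵥ c) | p α ≤ θ, k ∈ K}`.
theorem exists_separation_of_lt_primal (hKclosed : IsClosed K) (hKconvex : Convex ℝ K) {s : ℝ}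
    (hs : ∀ α, p α ≤ θ → ∑ i, α i • b i - b0 ∈ K → s < α ⬝ᵥ c) :
    ∃ (y : B →L[ℝ] ℝ) (lam u : ℝ),
      (∀ α, p α ≤ θ → ∀ k ∈ K, y (∑ i, α i • b i - k) + α ⬝ᵥ c * lam < u) ∧
        u < y b0 + s * lam := by
  let L : (Fin n → ℝ) →ₗ[ℝ] B × ℝ :=
    (Fintype.linearCombination ℝ b).prod (Fintype.linearCombination ℝ c)
  let S : Set (B × ℝ) := L '' p.closedBall 0 θ + (-K) ×ˢ ({0} : Set ℝ)
  have hS : ∀ α, p α ≤ θ → ∀ k ∈ K, (∑ i, α i • b i - k, α ⬝ᵥ c) ∈ S := by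
    intro α hα k hk
    refine ⟨L α, mem_image_of_mem _ ((p.mem_closedBall_zero).2 hα), (-k, 0),
      ⟨by simpa using hk, rfl⟩, ?_⟩
    simp [L, Fintype.linearCombination_apply, dotProduct, sub_eq_add_neg]
  have hSclosed : IsClosed S := (hKclosed.neg.prod isClosed_singleton).add_left_of_isCompact
    ((p.isCompact_closedBall_zero hp θ).image L.continuous_of_finiteDimensional)
  have hSconvex : Convex ℝ S :=
    ((p.convex_closedBall 0 θ).linear_image L).add (hKconvex.neg.prod (convex_singleton 0))
  have hnotin : (b0, s) ∉ S := by
    rintro ⟨_, ⟨α, hα, rfl⟩, ⟨k, t⟩, ⟨hk, rfl : t = 0⟩, heq⟩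
    have hb : ∑ i, α i • b i + k = b0 := by
      simpa [L, Fintype.linearCombination_apply] using congrArg Prod.fst heq
    have hc : α ⬝ᵥ c = s := by
      simpa [L, Fintype.linearCombination_apply, dotProduct] using congrArg Prod.snd heq
    refine (hs α ((p.mem_closedBall_zero).1 hα) ?_).ne' hc
    rwa [← hb, sub_add_cancel_left]
  obtain ⟨f, u, hfS, hfu⟩ := geometric_hahn_banach_closed_point hSconvex hSclosed hnotin
  have hf : ∀ x t, f (x, t) = f.comp (.inl ℝ B ℝ) x + t * f (0, 1) := fun x t => by
    have hxt : ((x, t) : B × ℝ) = (x, 0) + t • (0, 1) := by simp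
    rw [hxt, map_add, map_smul, smul_eq_mul]
    rfl
  refine ⟨f.comp (.inl ℝ B ℝ), f (0, 1), u, fun α hα k hk => ?_, hf b0 s ▸ hfu⟩
  rw [← hf]
  exact hfS _ (hS α hα k hk)

theorem exists_dualObjective_ge (hKclosed : IsClosed K) (hKconvex : Convex ℝ K)
    (hKcone : ∀ t : ℝ, 0 ≤ t → ∀ v ∈ K, t • v ∈ K) (hθ : 0 < θ) {α₀ : Fin n → ℝ}
    (hα₀ : p α₀ ≤ θ) (hfeas₀ : ∑ i, α₀ i • b i - b0 ∈ K) {s : ℝ}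
    (hs : ∀ α, p α ≤ θ → ∑ i, α i • b i - b0 ∈ K → s < α ⬝ᵥ c) :
    ∃ y : B →L[ℝ] ℝ, (∀ v ∈ K, 0 ≤ y v) ∧ s ≤ dualObjective b0 b c p θ y := by
  obtain ⟨y, lam, u, hsep, hu⟩ := exists_separation_of_lt_primal p hp hKclosed hKconvex hs
  have hy : ∀ k ∈ K, 0 ≤ y k := fun k hk =>
    nonneg_of_forall_nonneg_lt_mul (v := -u) fun t ht => by
      have := hsep 0 (by simpa using hθ.le) (t • k) (hKcone t ht k hk)
      simp only [Pi.zero_apply, zero_smul, Finset.sum_const_zero, zero_sub, map_neg, map_smul,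
        smul_eq_mul, zero_dotProduct, zero_mul, add_zero] at this
      linarith
  have hlam : lam < 0 := by
    have h₀ := hsep α₀ hα₀ _ hfeas₀
    rw [sub_sub_cancel] at h₀
    nlinarith [hs α₀ hα₀ hfeas₀]
  have hK0 : (0 : B) ∈ K := by simpa using hKcone 0 le_rfl _ hfeas₀
  set z := (-lam)⁻¹ • y
  have hyz : ∀ x, y x = -lam * z x := fun x => by
    rw [smul_apply, smul_eq_mul, mul_inv_cancel_left₀ (neg_ne_zero.2 hlam.ne)]
  refine ⟨z, fun k hk => smul_nonneg (inv_nonneg.2 (neg_nonneg.2 hlam.le)) (hy k hk), ?_⟩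
  have hbound : θ * dualNormR p (fun i => z (b i) - c i) ≤ z b0 - s := by
    refine mul_dualNormR_le p hθ fun α hα => ?_
    have hlt : -lam * (z (∑ i, α i • b i) - α ⬝ᵥ c) < -lam * (z b0 - s) := by
      have := hsep α hα 0 hK0
      simp only [sub_zero, hyz] at this hu
      linarith
    have hpair : α ⬝ᵥ (fun i => z (b i) - c i) = z (∑ i, α i • b i) - α ⬝ᵥ c := by
      simp [dotProduct, map_sum, mul_sub, Finset.sum_sub_distrib, mul_comm]
    rw [hpair]
    exact (lt_of_mul_lt_mul_left hlt (neg_nonneg.2 hlam.le)).le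
  unfold dualObjective
  linarith

end Duality

theorem stmt0
    {B : Type*} [NormedAddCommGroup B] [NormedSpace ℝ B]
    (K : Set B) (hKclosed : IsClosed K) (hKconvex : Convex ℝ K)
    (hKcone : ∀ t : ℝ, 0 ≤ t → ∀ v ∈ K, t • v ∈ K)
    {n : ℕ} (b0 : B) (b : Fin n → B) (c : Fin n → ℝ)
    (R : (Fin n → ℝ) → ℝ)
    (hRtri : ∀ α β, R (α + β) ≤ R α + R β)
    (hRsmul : ∀ (a : ℝ) (α), R (a • α) = |a| * R α)
    (hRdef : ∀ α, R α = 0 → α = 0)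
    (θP : ℝ) (hθP : 0 < θP)
    (Jn Jtn : ℝ)
    (hJn : Jn = sInf {t | ∃ α : Fin n → ℝ,
      R α ≤ θP ∧ (∑ i, α i • b i) - b0 ∈ K ∧ t = ∑ i, α i * c i})
    (hJtn : Jtn = sSup {t | ∃ y : B →L[ℝ] ℝ, (∀ v ∈ K, 0 ≤ y v) ∧
      t = y b0 - θP * dualNormR R (fun i => y (b i) - c i)})
    (hfeas : ∃ α : Fin n → ℝ, R α ≤ θP ∧ (∑ i, α i • b i) - b0 ∈ K) :
    Jn = Jtn ∧
      ∀ γ : ℝ, 0 < γ →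
        (∀ y : B →L[ℝ] ℝ, (∀ v ∈ K, 0 ≤ y v) →
          γ * ‖y‖ ≤ dualNormR R (fun i => y (b i))) →
        ‖b0‖ < γ * θP →
        ∀ ystar : B →L[ℝ] ℝ, (∀ v ∈ K, 0 ≤ ystar v) →
          ystar b0 - θP * dualNormR R (fun i => ystar (b i) - c i) = Jtn →
          (∀ JLB : ℝ, JLB ≤ Jn →
            ‖ystar‖ ≤ (θP * dualNormR R c - JLB) / (γ * θP - ‖b0‖)) ∧
          ‖ystar‖ ≤ 2 * θP * dualNormR R c / (γ * θP - ‖b0‖) := by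
  let p : Seminorm ℝ (Fin n → ℝ) := .of R hRtri fun a α => by rw [hRsmul, Real.norm_eq_abs]
  obtain ⟨α₀, hα₀, hfeas₀⟩ := hfeas
  have hJ : Jn = Jtn := by
    rw [hJn, hJtn, eq_comm]
    refine csSup_eq_csInf_of_forall_exists_le ⟨_, α₀, hα₀, hfeas₀, rfl⟩ ⟨_, 0, fun _ _ => le_rfl, rfl⟩
      ?_ fun s hs => ?_
    · rintro _ ⟨y, hy, rfl⟩ _ ⟨α, hα, hfeas, rfl⟩
      exact dualObjective_le_dotProduct p hRdef hθP hy hα hfeas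
    · obtain ⟨y, hy, hsy⟩ := exists_dualObjective_ge p hRdef hKclosed hKconvex hKcone hθP hα₀
        hfeas₀ fun α hα hfeas => hs _ ⟨α, hα, hfeas, rfl⟩
      exact ⟨_, ⟨y, hy, rfl⟩, hsy⟩
  refine ⟨hJ, fun γ _ hγ hb0 ystar hystar hopt => ?_⟩
  have hbound : ∀ JLB ≤ Jn, ‖ystar‖ ≤ (θP * dualNormR R c - JLB) / (γ * θP - ‖b0‖) :=
    fun JLB hJLB => (le_div_iff₀ (sub_pos.2 hb0)).2 <|
      norm_mul_le_of_le_dualObjective p hRdef hθP.le (hγ ystar hystar) (hJLB.trans_eq (hJ.trans hopt.symm))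
  have hlower : -(θP * dualNormR R c) ≤ Jn := by
    rw [hJn]
    refine le_csInf ⟨_, α₀, hα₀, hfeas₀, rfl⟩ ?_
    rintro _ ⟨α, hα, -, rfl⟩
    exact neg_mul_dualNormR_le_dotProduct p hRdef hθP hα c
  refine ⟨hbound, ?_⟩
  convert hbound _ hlower using 2
  ring
end

section
/- Suppose X is a real Hilbert space with norm induced by its inner product, {xᵢ}_{i∈ℕ} is an orthonormal family whose span is dense in X, the norm ‖·‖_R on ℝⁿ is the Euclidean norm, and θ_P ≥ ‖x*‖. Assume the primal problem Jₙ is feasible, and that there exists γ > 0 such that ‖(y(A x₁),…,y(A xₙ))‖₂ ≥ γ‖y‖_* for every y ∈ 𝕂* with γθ_P > ‖b‖. Then 0 ≤ Jₙ − J ≤ (‖c₀‖_{*n} + θ_D ‖A‖_n)·‖Π_{Xₙ⊥}(x*)‖, where Xₙ := span(x₁,…,xₙ), Xₙ⊥ is its orthogonal complement, Π_{Xₙ⊥} the orthogonal projection onto Xₙ⊥, the restricted norms are ‖c₀‖_{*n} := sup_{x ∈ Xₙ⊥} c₀(x)/‖x‖ and ‖A‖_n := sup_{x ∈ Xₙ⊥}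 ‖A x‖/‖x‖, and θ_D := 2θ_P‖c‖₂ / (γθ_P − ‖b‖). -/
open scoped RealInnerProductSpace Pointwise
open Metric

/-!
Projecting `x*` onto `Xₙ` gives coefficients `α₀` with `‖α₀‖ ≤ ‖x*‖ ≤ θ_P`, whose constraint
residual misses `𝕂` only by `A (Π x*)`, where `Π` projects onto `Xₙ⊥`. By Hahn–Banach
separation from the compact convex set `A(Xₙ ∩ ball θ_P) - 𝕂`, the inf-sup condition makes the
truncated constraint solvable for every right-hand side `b + w` with `‖w‖ ≤ δ := γ θ_P - ‖b‖`.
Mixing `α₀` with such a Slater point, with weight `‖A Π x*‖ / (‖A Π x*‖ + δ)` on the latter,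
repairs feasibility at a cost of at most `2 θ_P ‖c‖₂ ‖A Π x*‖ / δ`. Conversely every coefficient
vector feasible for `Jₙ` yields a point feasible for `J`, so `J ≤ Jₙ`.
-/

theorem exists_mem_closedBall_apply_eq_mul_norm {E : Type*} [NormedAddCommGroup E]
    [InnerProductSpace ℝ E] [CompleteSpace E] (f : E →L[ℝ] ℝ) {θ : ℝ} (hθ : 0 ≤ θ) :
    ∃ β ∈ closedBall (0 : E) θ, f β = θ * ‖f‖ := by
  set g := (InnerProductSpace.toDual ℝ E).symm f
  have hg : ‖g‖ = ‖f‖ := LinearIsometryEquiv.norm_map _ _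
  rcases (norm_nonneg g).eq_or_lt with hg0 | hg0
  · refine ⟨0, mem_closedBall_self hθ, ?_⟩
    rw [map_zero, ← hg, ← hg0, mul_zero]
  refine ⟨(θ / ‖g‖) • g, ?_, ?_⟩
  · rw [mem_closedBall_zero_iff, norm_smul, Real.norm_of_nonneg (by positivity),
      div_mul_cancel₀ _ hg0.ne']
  · rw [← InnerProductSpace.toDual_symm_apply, inner_smul_right, real_inner_self_eq_norm_sq, hg]
    field_simp [hg0.ne']

section Cone

variable {B : Type*} [NormedAddCommGroup B] [NormedSpace ℝ B] {K : Set B}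

theorem exists_dual_lt_of_notMem_sub (hKclosed : IsClosed K) (hKconvex : Convex ℝ K)
    (hKcone : ∀ t : ℝ, 0 ≤ t → ∀ u ∈ K, t • u ∈ K) (h0K : (0 : B) ∈ K) {Q : Set B}
    (hQcompact : IsCompact Q) (hQconvex : Convex ℝ Q) (hQ : Q.Nonempty) {d : B}
    (hd : d ∉ Q - K) : ∃ y : B →L[ℝ] ℝ, (∀ u ∈ K, 0 ≤ y u) ∧ ∀ q ∈ Q, y q < y d := by
  have hclosed : IsClosed (Q - K) := by
    rw [sub_eq_add_neg]
    exact hKclosed.neg.add_left_of_isCompact hQcompact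
  obtain ⟨f, s, hfd, hf⟩ :=
    geometric_hahn_banach_point_closed (hQconvex.sub hKconvex) hclosed hd
  have hfQ : ∀ q ∈ Q, s < f q := fun q hq => by
    simpa using hf (q - 0) (Set.sub_mem_sub hq h0K)
  refine ⟨-f, fun u hu => ?_, fun q hq => ?_⟩
  · obtain ⟨q, hq⟩ := hQ
    by_contra! hfu
    rw [neg_apply, neg_neg_iff_pos] at hfu
    -- moving far enough along the ray of `u` drives `f` below the separating level `s`
    set t := (f q - s) / f u
    have ht : 0 ≤ t := div_nonneg (sub_nonneg.2 (hfQ q hq).le) hfu.le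
    have h := hf (q - t • u) (Set.sub_mem_sub hq (hKcone t ht u hu))
    rw [map_sub, map_smul, smul_eq_mul, div_mul_cancel₀ _ hfu.ne'] at h
    linarith
  · simp only [neg_apply, neg_lt_neg_iff]
    exact hfd.trans (hfQ q hq)

theorem exists_mem_closedBall_sub_mem_of_infsup (hKclosed : IsClosed K) (hKconvex : Convex ℝ K)
    (hKcone : ∀ t : ℝ, 0 ≤ t → ∀ u ∈ K, t • u ∈ K) (h0K : (0 : B) ∈ K)
    {E : Type*} [NormedAddCommGroup E] [InnerProductSpace ℝ E] [FiniteDimensional ℝ E]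
    (L : E →L[ℝ] B) {γ θ : ℝ} (hθ : 0 ≤ θ)
    (hinfsup : ∀ y : B →L[ℝ] ℝ, (∀ u ∈ K, 0 ≤ y u) → γ * ‖y‖ ≤ ‖y.comp L‖)
    {d : B} (hd : ‖d‖ ≤ γ * θ) : ∃ β ∈ closedBall (0 : E) θ, L β - d ∈ K := by
  by_contra! h
  have hdQ : d ∉ L '' closedBall 0 θ - K := by
    rintro ⟨_, ⟨β, hβ, rfl⟩, u, hu, hd⟩
    exact h β hβ (by rwa [← hd, sub_sub_cancel])
  obtain ⟨y, hyK, hy⟩ := exists_dual_lt_of_notMem_sub hKclosed hKconvex hKcone h0K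
    ((isCompact_closedBall 0 θ).image L.continuous)
    ((convex_closedBall 0 θ).linear_image L.toLinearMap)
    ⟨L 0, 0, mem_closedBall_self hθ, rfl⟩ hdQ
  obtain ⟨β, hβ, hyβ⟩ := exists_mem_closedBall_apply_eq_mul_norm (y.comp L) hθ
  have hlt : θ * ‖y.comp L‖ < y d := hyβ ▸ hy (L β) ⟨β, hβ, rfl⟩
  have hyd : y d ≤ ‖y‖ * (γ * θ) :=
    (le_abs_self _).trans ((y.le_opNorm d).trans (by gcongr))
  linarith [mul_le_mul_of_nonneg_right (hinfsup y hyK) hθ]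

theorem exists_mem_closedBall_sub_mem_le_of_slater (hKconvex : Convex ℝ K)
    {E : Type*} [NormedAddCommGroup E] [NormedSpace ℝ E] (L : E →L[ℝ] B) (ℓ : E →L[ℝ] ℝ)
    {θ δ : ℝ} {b e : B} {α : E} (hα : α ∈ closedBall 0 θ) (hαe : L α - b + e ∈ K) (hδ : 0 < δ)
    (hslater : ∀ w : B, ‖w‖ ≤ δ → ∃ β ∈ closedBall (0 : E) θ, L β - (b + w) ∈ K) :
    ∃ α' ∈ closedBall (0 : E) θ, L α' - b ∈ K ∧ ℓ α' ≤ ℓ α + 2 * θ * ‖ℓ‖ * ‖e‖ / δ := by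
  set ε := ‖e‖
  have hε : 0 ≤ ε := norm_nonneg e
  obtain ⟨β, hβ, hβK⟩ := hslater ((δ / ε) • e) <| by
    rw [norm_smul, Real.norm_of_nonneg (by positivity)]
    show δ / ε * ε ≤ δ
    rcases hε.eq_or_lt with h | h
    · rw [← h, mul_zero]; exact hδ.le
    · rw [div_mul_cancel₀ _ h.ne']
  -- the weight `t` is chosen so that `t • (δ / ε) • e` exactly cancels the defect `(1 - t) • e`
  set t := ε / (ε + δ) with ht
  have ht0 : 0 ≤ t := by positivity
  have ht1 : t ≤ 1 := (div_le_one (by positivity)).2 (by linarith)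
  have hte : t • (δ / ε) • e = (1 - t) • e := by
    rcases eq_or_ne e 0 with rfl | he
    · simp
    have hε0 : ε ≠ 0 := norm_ne_zero_iff.2 he
    rw [smul_smul]
    congr 1
    rw [ht]
    field_simp
    ring
  refine ⟨(1 - t) • α + t • β, convex_closedBall 0 θ hα hβ (by linarith) ht0 (by ring), ?_, ?_⟩
  · have h : L ((1 - t) • α + t • β) - b =
        (1 - t) • (L α - b + e) + t • (L β - (b + (δ / ε) • e)) := by
      rw [map_add, map_smul, map_smul, smul_sub t, smul_add t, hte]
      module
    rw [h]
    exact hKconvex hαe hβK (by linarith) ht0 (by ring)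
  · have hβα : ℓ β - ℓ α ≤ ‖ℓ‖ * (2 * θ) := by
      rw [mem_closedBall_zero_iff] at hα hβ
      rw [← map_sub]
      refine (le_abs_self _).trans ((ℓ.le_opNorm _).trans ?_)
      gcongr
      linarith [norm_sub_le β α]
    have htε : t ≤ ε / δ := div_le_div_of_nonneg_left hε hδ (by linarith)
    have hθ : 0 ≤ θ := nonneg_of_mem_closedBall hα
    have hcost : 0 ≤ ‖ℓ‖ * (2 * θ) := by positivity
    calc ℓ ((1 - t) • α + t • β) = ℓ α + t * (ℓ β - ℓ α) := by
          rw [map_add, map_smul, map_smul, smul_eq_mul, smul_eq_mul]; ring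
      _ ≤ ℓ α + t * (‖ℓ‖ * (2 * θ)) := by gcongr
      _ ≤ ℓ α + ε / δ * (‖ℓ‖ * (2 * θ)) := by gcongr
      _ = ℓ α + 2 * θ * ‖ℓ‖ * ε / δ := by ring

end Cone

theorem le_sSup_div_norm_mul_norm {E : Type*} [SeminormedAddCommGroup E] {s : Set E}
    {f : E → ℝ} {C : ℝ} (hC : 0 ≤ C) (hf : ∀ v, f v ≤ C * ‖v‖) {v : E} (hv : v ∈ s) :
    f v ≤ sSup {t | ∃ v ∈ s, t = f v / ‖v‖} * ‖v‖ := by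
  have hbdd : BddAbove {t | ∃ v ∈ s, t = f v / ‖v‖} := by
    refine ⟨C, ?_⟩
    rintro _ ⟨u, -, rfl⟩
    rcases (norm_nonneg u).eq_or_lt with hu | hu
    · rwa [← hu, div_zero]
    · exact (div_le_iff₀ hu).2 (hf u)
  rcases (norm_nonneg v).eq_or_lt with hv0 | hv0
  · simpa [← hv0] using hf v
  · exact (div_le_iff₀ hv0).1 (le_csSup hbdd ⟨v, hv, rfl⟩)

noncomputable def euclideanLinearCombination {ι E : Type*} [Fintype ι] [NormedAddCommGroup E]
    [NormedSpace ℝ E] (v : ι → E) : EuclideanSpace ℝ ι →L[ℝ] E :=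
  ∑ i, (EuclideanSpace.proj i).smulRight (v i)

section

variable {ι E : Type*} [Fintype ι]

@[simp]
theorem euclideanLinearCombination_apply [NormedAddCommGroup E] [NormedSpace ℝ E] (v : ι → E)
    (β : EuclideanSpace ℝ ι) : euclideanLinearCombination v β = ∑ i, β i • v i := by
  simp [euclideanLinearCombination]

theorem norm_comp_euclideanLinearCombination [NormedAddCommGroup E] [NormedSpace ℝ E]
    (y : E →L[ℝ] ℝ) (v : ι → E) :
    ‖y.comp (euclideanLinearCombination v)‖ = √(∑ i, y (v i) ^ 2) := by
  have : y.comp (euclideanLinearCombination v) = innerSL ℝ (WithLp.toLp 2 fun i => y (v i)) := by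
    ext β
    simp [PiLp.inner_apply]
  rw [this, innerSL_apply_norm, EuclideanSpace.norm_eq]
  simp

theorem Orthonormal.norm_euclideanLinearCombination [NormedAddCommGroup E]
    [InnerProductSpace ℝ E] {v : ι → E} (hv : Orthonormal ℝ v) (β : EuclideanSpace ℝ ι) :
    ‖euclideanLinearCombination v β‖ = ‖β‖ := by
  rw [← sq_eq_sq₀ (norm_nonneg _) (norm_nonneg _), ← real_inner_self_eq_norm_sq,
    euclideanLinearCombination_apply, hv.inner_sum, EuclideanSpace.real_norm_sq_eq]
  simp [sq]

theorem Orthonormal.exists_euclideanLinearCombination_eq_sub [NormedAddCommGroup E]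
    [InnerProductSpace ℝ E] {v : ι → E} (hv : Orthonormal ℝ v) {z p : E}
    (hp : p ∈ (Submodule.span ℝ (Set.range v))ᗮ)
    (hzp : ∀ w ∈ (Submodule.span ℝ (Set.range v))ᗮ, ⟪z - p, w⟫ = 0) :
    ∃ α : EuclideanSpace ℝ ι, euclideanLinearCombination v α = z - p ∧ ‖α‖ ≤ ‖z‖ := by
  set S := Submodule.span ℝ (Set.range v)
  have : FiniteDimensional ℝ S := FiniteDimensional.span_of_finite ℝ (Set.finite_range v)
  have hzpS : z - p ∈ S := by
    rw [← S.orthogonal_orthogonal, Submodule.mem_orthogonal]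
    exact fun w hw => real_inner_comm w _ ▸ hzp w hw
  obtain ⟨c, hc⟩ := (Submodule.mem_span_range_iff_exists_fun ℝ).1 hzpS
  refine ⟨WithLp.toLp 2 c, by simpa using hc, ?_⟩
  have hpyth := norm_add_sq_eq_norm_sq_add_norm_sq_real (hzp p hp)
  rw [sub_add_cancel] at hpyth
  rw [← hv.norm_euclideanLinearCombination, euclideanLinearCombination_apply]
  simp only [hc]
  nlinarith [norm_nonneg (z - p), norm_nonneg z, norm_nonneg p]

end

theorem stmt2_general
    {X : Type*} [NormedAddCommGroup X] [InnerProductSpace ℝ X]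
    {B : Type*} [NormedAddCommGroup B] [NormedSpace ℝ B]
    (c0 : X →L[ℝ] ℝ) (A : X →L[ℝ] B)
    (K : Set B) (hKclosed : IsClosed K) (hKconvex : Convex ℝ K)
    (hKcone : ∀ t : ℝ, 0 ≤ t → ∀ v ∈ K, t • v ∈ K)
    (b0 : B)
    -- the infinite LP attains a minimizer x*
    (xstar : X) (hxfeas : A xstar - b0 ∈ K)
    (hxmin : ∀ x : X, A x - b0 ∈ K → c0 xstar ≤ c0 x)
    (J : ℝ) (hJ : J = c0 xstar)
    -- an orthonormal family with dense span
    (x : ℕ → X) (honb : Orthonormal ℝ x)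
    (n : ℕ) (θP : ℝ) (hθP : ‖xstar‖ ≤ θP)
    -- the semi-infinite primal value with Euclidean norm constraint
    (Jn : ℝ)
    (hJn : Jn = sInf {t | ∃ α : Fin n → ℝ,
      Real.sqrt (∑ i, (α i) ^ 2) ≤ θP ∧ (∑ i, α i • A (x i)) - b0 ∈ K ∧
        t = ∑ i, α i * c0 (x i)})
    -- the inf-sup regularity condition
    (γ : ℝ)
    (hinfsup : ∀ y : B →L[ℝ] ℝ, (∀ v ∈ K, 0 ≤ y v) →
      γ * ‖y‖ ≤ Real.sqrt (∑ i : Fin n, (y (A (x i))) ^ 2))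
    (hγθ : ‖b0‖ < γ * θP)
    -- orthogonal projection of x* onto the orthogonal complement of Xₙ
    (pxo : X)
    (hpxo_mem : pxo ∈ (Submodule.span ℝ (Set.range fun i : Fin n => x i))ᗮ)
    (hpxo_orth : ∀ w ∈ (Submodule.span ℝ (Set.range fun i : Fin n => x i))ᗮ,
      ⟪xstar - pxo, w⟫ = 0) :
    0 ≤ Jn - J ∧
      Jn - J ≤
        (sSup {t | ∃ v ∈ (Submodule.span ℝ (Set.range fun i : Fin n => x i))ᗮ,
            t = c0 v / ‖v‖} +
          (2 * θP * Real.sqrt (∑ i : Fin n, (c0 (x i)) ^ 2) / (γ * θP - ‖b0‖)) *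
            sSup {t | ∃ v ∈ (Submodule.span ℝ (Set.range fun i : Fin n => x i))ᗮ,
              t = ‖A v‖ / ‖v‖}) * ‖pxo‖ := by
  set T := {t | ∃ α : Fin n → ℝ, Real.sqrt (∑ i, (α i) ^ 2) ≤ θP ∧
    (∑ i, α i • A (x i)) - b0 ∈ K ∧ t = ∑ i, α i * c0 (x i)}
  set P := euclideanLinearCombination fun i : Fin n => x i
  have hlb : ∀ t ∈ T, J ≤ t := by
    rintro t ⟨α, -, hα, rfl⟩
    have h := hxmin (∑ i, α i • x i) (by simpa only [map_sum, map_smul] using hα)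
    simpa only [hJ, map_sum, map_smul, smul_eq_mul] using h
  have hθP0 : 0 ≤ θP := (norm_nonneg xstar).trans hθP
  have h0K : (0 : B) ∈ K := by simpa using hKcone 0 le_rfl _ hxfeas
  have hslater (w : B) (hw : ‖w‖ ≤ γ * θP - ‖b0‖) :
      ∃ β ∈ closedBall 0 θP, A.comp P β - (b0 + w) ∈ K := by
    refine exists_mem_closedBall_sub_mem_of_infsup hKclosed hKconvex hKcone h0K (A.comp P)
      (γ := γ) hθP0 (fun y hy => ?_) (by linarith [norm_add_le b0 w])
    rw [← ContinuousLinearMap.comp_assoc, norm_comp_euclideanLinearCombination]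
    exact hinfsup y hy
  have honb' : Orthonormal ℝ fun i : Fin n => x i := honb.comp _ Fin.val_injective
  obtain ⟨α₀, hPα₀, hα₀⟩ := honb'.exists_euclideanLinearCombination_eq_sub hpxo_mem hpxo_orth
  obtain ⟨α, hα, hαK, hαc⟩ := exists_mem_closedBall_sub_mem_le_of_slater hKconvex (A.comp P)
    (c0.comp P) (mem_closedBall_zero_iff.2 (hα₀.trans hθP)) (e := A pxo)
    (by simpa [P, hPα₀, sub_add_eq_add_sub] using hxfeas) (sub_pos.2 hγθ) hslater
  have hmem : c0 (P α) ∈ T :=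
    ⟨α, by simpa [EuclideanSpace.norm_eq] using hα, by simpa [P] using hαK, by simp [P]⟩
  have hNc := le_sSup_div_norm_mul_norm (norm_nonneg c0)
    (fun v => (le_abs_self _).trans (c0.le_opNorm v)) (Submodule.neg_mem _ hpxo_mem)
  have hNA := le_sSup_div_norm_mul_norm (norm_nonneg A) A.le_opNorm hpxo_mem
  subst hJn
  refine ⟨sub_nonneg.2 (le_csInf ⟨_, hmem⟩ hlb), ?_⟩
  have hθD : 0 ≤ 2 * θP * √(∑ i : Fin n, c0 (x i) ^ 2) / (γ * θP - ‖b0‖) :=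
    div_nonneg (by positivity) (sub_pos.2 hγθ).le
  rw [ContinuousLinearMap.comp_apply, ContinuousLinearMap.comp_apply, hPα₀, map_sub, ← hJ,
    norm_comp_euclideanLinearCombination, mul_div_right_comm] at hαc
  simp only [SetLike.mem_coe, map_neg, norm_neg] at hNc hNA
  linarith [csInf_le ⟨J, hlb⟩ hmem, mul_le_mul_of_nonneg_left hNA hθD]

theorem stmt2
    {X : Type*} [NormedAddCommGroup X] [InnerProductSpace ℝ X] [CompleteSpace X]
    {B : Type*} [NormedAddCommGroup B] [NormedSpace ℝ B]
    (c0 : X →L[ℝ] ℝ) (A : X →L[ℝ] B)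
    (K : Set B) (hKclosed : IsClosed K) (hKconvex : Convex ℝ K)
    (hKcone : ∀ t : ℝ, 0 ≤ t → ∀ v ∈ K, t • v ∈ K)
    (b0 : B)
    -- the infinite LP attains a minimizer x*
    (xstar : X) (hxfeas : A xstar - b0 ∈ K)
    (hxmin : ∀ x : X, A x - b0 ∈ K → c0 xstar ≤ c0 x)
    (J : ℝ) (hJ : J = c0 xstar)
    -- an orthonormal family with dense span
    (x : ℕ → X) (honb : Orthonormal ℝ x)
    (hdense : (Submodule.span ℝ (Set.range x)).topologicalClosure = ⊤)
    (n : ℕ) (θP : ℝ) (hθP : ‖xstar‖ ≤ θP)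
    -- the semi-infinite primal value with Euclidean norm constraint
    (Jn : ℝ)
    (hJn : Jn = sInf {t | ∃ α : Fin n → ℝ,
      Real.sqrt (∑ i, (α i) ^ 2) ≤ θP ∧ (∑ i, α i • A (x i)) - b0 ∈ K ∧
        t = ∑ i, α i * c0 (x i)})
    (hfeas : ∃ α : Fin n → ℝ,
      Real.sqrt (∑ i, (α i) ^ 2) ≤ θP ∧ (∑ i, α i • A (x i)) - b0 ∈ K)
    -- the inf-sup regularity condition
    (γ : ℝ) (hγ : 0 < γ)
    (hinfsup : ∀ y : B →L[ℝ] ℝ, (∀ v ∈ K, 0 ≤ y v) →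
      γ * ‖y‖ ≤ Real.sqrt (∑ i : Fin n, (y (A (x i))) ^ 2))
    (hγθ : ‖b0‖ < γ * θP)
    -- orthogonal projection of x* onto the orthogonal complement of Xₙ
    (pxo : X)
    (hpxo_mem : pxo ∈ (Submodule.span ℝ (Set.range fun i : Fin n => x i))ᗮ)
    (hpxo_orth : ∀ w ∈ (Submodule.span ℝ (Set.range fun i : Fin n => x i))ᗮ,
      ⟪xstar - pxo, w⟫ = 0) :
    0 ≤ Jn - J ∧
      Jn - J ≤
        (sSup {t | ∃ v ∈ (Submodule.span ℝ (Set.range fun i : Fin n => x i))ᗮ,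
            t = c0 v / ‖v‖} +
          (2 * θP * Real.sqrt (∑ i : Fin n, (c0 (x i)) ^ 2) / (γ * θP - ‖b0‖)) *
            sSup {t | ∃ v ∈ (Submodule.span ℝ (Set.range fun i : Fin n => x i))ᗮ,
              t = ‖A v‖ / ‖v‖}) * ‖pxo‖ :=
  stmt2_general c0 A K hKclosed hKconvex hKcone b0 xstar hxfeas hxmin J hJ x honb n θP hθP Jn hJn γ
    hinfsup hγθ pxo hpxo_mem hpxo_orth
end

section
/- Let K = [0,1]^m, let g : K → ℝ be Lipschitz continuous with constant L_g > 0 with respect to the ℓ∞-norm on K, and let g_max := max_{k ∈ K} g(k). Then for every η > 0, ∫_K exp( (g(k) − g_max)/η ) dk ≥ min{ (mη/L_g)^m , 1 } · exp( −min{ m , L_g/η } ), where the integral is with respect to the Lebesgue measure on K. -/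
/-!
Let `g k₀ = g_max`. For `0 ≤ r ≤ 1`, some axis-parallel cube of side `r` lies in
`[0,1]^m` and contains `k₀`; on it `g ≥ g k₀ - L r`, so the integral is at least
`r ^ m * exp (-L r / η)`. The choice `r = min (m η / L) 1` gives the stated bound.
-/

open MeasureTheory Set

lemma exists_Icc_add_subset_Icc_zero_one_of_mem {ι : Type*} {k₀ : ι → ℝ}
    (hk₀ : k₀ ∈ Icc (0 : ι → ℝ) 1) {r : ℝ} (hr0 : 0 ≤ r) (hr1 : r ≤ 1) :
    ∃ a : ι → ℝ, Icc a (a + fun _ => r) ⊆ Icc 0 1 ∧ k₀ ∈ Icc a (a + fun _ => r) := by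
  have h0 : ∀ i, 0 ≤ k₀ i := hk₀.1
  have h1 : ∀ i, k₀ i ≤ 1 := hk₀.2
  refine ⟨fun i => min (k₀ i) (1 - r), Icc_subset_Icc (fun i => ?_) (fun i => ?_), fun i => ?_,
    fun i => ?_⟩
  · exact le_min (h0 i) (sub_nonneg.2 hr1)
  · change min (k₀ i) (1 - r) + r ≤ 1
    linarith [min_le_right (k₀ i) (1 - r)]
  · exact min_le_left _ _
  · change k₀ i ≤ min (k₀ i) (1 - r) + r
    rw [← min_add_add_right, sub_add_cancel]
    exact le_min (by linarith) (h1 i)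

lemma pow_card_mul_exp_le_setIntegral_exp {ι : Type*} [Fintype ι] {K : NNReal}
    {g : (ι → ℝ) → ℝ} (hg : LipschitzOnWith K g (Icc 0 1)) {k₀ : ι → ℝ}
    (hk₀ : k₀ ∈ Icc (0 : ι → ℝ) 1) {η r : ℝ} (hη : 0 ≤ η) (hr0 : 0 ≤ r) (hr1 : r ≤ 1) :
    r ^ Fintype.card ι * Real.exp (-(K * r / η)) ≤
      ∫ k in Icc 0 1, Real.exp ((g k - g k₀) / η) := by
  obtain ⟨a, hsub, hk₀a⟩ := exists_Icc_add_subset_Icc_zero_one_of_mem hk₀ hr0 hr1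
  have hint : IntegrableOn (fun k => Real.exp ((g k - g k₀) / η)) (Icc 0 1) :=
    (Real.continuous_exp.comp_continuousOn ((hg.continuousOn.sub continuousOn_const).div_const η))
      |>.integrableOn_compact isCompact_Icc
  have hvol : (volume (Icc a (a + fun _ => r))).toReal = r ^ Fintype.card ι := by
    rw [Real.volume_Icc_pi_toReal (le_add_of_nonneg_right fun _ => hr0)]
    simp
  have hlow : ∀ k ∈ Icc a (a + fun _ => r), Real.exp (-(K * r / η)) ≤
      Real.exp ((g k - g k₀) / η) := by
    intro k hk
    have hdist : dist k₀ k ≤ r :=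
      calc dist k₀ k ≤ dist a (a + fun _ => r) := Real.dist_le_of_mem_pi_Icc hk₀a hk
        _ ≤ r := by
          rw [dist_self_add_right]
          exact pi_norm_const_le r |>.trans_eq (abs_of_nonneg hr0)
    have hgk : g k₀ - g k ≤ K * r :=
      calc g k₀ - g k ≤ dist (g k₀) (g k) := Real.sub_le_dist _ _
        _ ≤ K * dist k₀ k := hg.dist_le_mul k₀ hk₀ k (hsub hk)
        _ ≤ K * r := by gcongr
    rw [Real.exp_le_exp, ← neg_div]
    exact div_le_div_of_nonneg_right (by linarith) hη
  calc r ^ Fintype.card ι * Real.exp (-(K * r / η))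
      ≤ ∫ k in Icc a (a + fun _ => r), Real.exp ((g k - g k₀) / η) := by
        rw [← hvol, mul_comm]
        exact setIntegral_ge_of_const_le_real measurableSet_Icc
          isCompact_Icc.measure_lt_top.ne hlow (hint.mono_set hsub)
    _ ≤ ∫ k in Icc 0 1, Real.exp ((g k - g k₀) / η) :=
        setIntegral_mono_set hint (.of_forall fun _ => (Real.exp_pos _).le) hsub.eventuallyLE

lemma min_pow_one_eq_min_one_pow {x : ℝ} (hx : 0 ≤ x) (n : ℕ) :
    min (x ^ n) 1 = min x 1 ^ n := by
  rcases le_total x 1 with h | h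
  · rw [min_eq_left h, min_eq_left (pow_le_one₀ hx h)]
  · rw [min_eq_right h, one_pow, min_eq_right (one_le_pow₀ h)]

lemma mul_min_div_one_div_eq_min {L η c : ℝ} (hL : 0 < L) (hη : 0 < η) :
    L * min (c * η / L) 1 / η = min c (L / η) := by
  rw [mul_min_of_nonneg _ _ hL.le, ← min_div_div_right hη.le, mul_one,
    mul_div_cancel₀ _ hL.ne', mul_div_cancel_right₀ _ hη.ne']

theorem stmt5_general (m : ℕ) (Lg : ℝ) (hLg : 0 < Lg) (g : (Fin m → ℝ) → ℝ)
    (hLip : ∀ x ∈ Set.Icc (0 : Fin m → ℝ) 1, ∀ y ∈ Set.Icc (0 : Fin m → ℝ) 1,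
      |g x - g y| ≤ Lg * ‖x - y‖)
    (gmax : ℝ)
    (hattain : ∃ k ∈ Set.Icc (0 : Fin m → ℝ) 1, g k = gmax)
    (η : ℝ) (hη : 0 < η) :
    min (((m : ℝ) * η / Lg) ^ m) 1 * Real.exp (-min (m : ℝ) (Lg / η)) ≤
      ∫ k in Set.Icc (0 : Fin m → ℝ) 1, Real.exp ((g k - gmax) / η) := by
  obtain ⟨k₀, hk₀, rfl⟩ := hattain
  have hg : LipschitzOnWith Lg.toNNReal g (Icc 0 1) :=
    .of_dist_le' fun x hx y hy => by
      simpa only [dist_eq_norm, Real.norm_eq_abs] using hLip x hx y hy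
  have key := pow_card_mul_exp_le_setIntegral_exp hg hk₀ hη.le
    (r := min ((m : ℝ) * η / Lg) 1) (le_min (by positivity) zero_le_one) (min_le_right _ _)
  rwa [Fintype.card_fin, Real.coe_toNNReal _ hLg.le, mul_min_div_one_div_eq_min hLg hη,
    ← min_pow_one_eq_min_one_pow (by positivity)] at key

theorem stmt5 (m : ℕ) (Lg : ℝ) (hLg : 0 < Lg) (g : (Fin m → ℝ) → ℝ)
    (hLip : ∀ x ∈ Set.Icc (0 : Fin m → ℝ) 1, ∀ y ∈ Set.Icc (0 : Fin m → ℝ) 1,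
      |g x - g y| ≤ Lg * ‖x - y‖)
    (gmax : ℝ)
    (hattain : ∃ k ∈ Set.Icc (0 : Fin m → ℝ) 1, g k = gmax)
    (hub : ∀ k ∈ Set.Icc (0 : Fin m → ℝ) 1, g k ≤ gmax)
    (η : ℝ) (hη : 0 < η) :
    min (((m : ℝ) * η / Lg) ^ m) 1 * Real.exp (-min (m : ℝ) (Lg / η)) ≤
      ∫ k in Set.Icc (0 : Fin m → ℝ) 1, Real.exp ((g k - gmax) / η) :=
  stmt5_general m Lg hLg g hLip gmax hattain η hη
end

section
/- Let K = [0,1]^m with Lebesgue (uniform) measure λ, let g : K → ℝ be Lipschitz continuous with constant L_g > 0 with respect to the ℓ∞-norm, and let η > 0. Let y be the Gibbs probability measure on K with density dy/dλ = exp(g/η) / ∫_K exp(g(k)/η) dk. Then the relative entropy of y with respect to λ satisfies KL(y‖λ) := ∫_K ln(dy/dλ) dy ≤ m · max{ ln( (e·L_g / m) · η⁻¹ ), 1 }. -/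
/-!
Since `log ρ = g/η - log Z ≤ max g/η - log Z` and `∫ ρ = 1`, the relative entropy is at most
`g(x₀)/η - log Z` for a maximiser `x₀` of `g`. A cube of side `δ ≤ 1` inside `K` within
`ℓ∞`-distance `δ` of `x₀` carries `g ≥ g(x₀) - L_g δ`, so `Z ≥ δ^m exp((g(x₀) - L_g δ)/η)`.
Hence the entropy is at most `L_g δ/η - m log δ` for every `δ ∈ (0, 1]`, and the choice
`δ = min(1, mη/L_g)` gives the bound.
-/

open MeasureTheory Set Real

theorem integral_log_mul_le_of_log_le {α : Type*} [MeasurableSpace α] {μ : Measure α}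
    {ρ : α → ℝ} {C : ℝ} (hρ : Integrable ρ μ) (hlogρ : Integrable (fun x => log (ρ x) * ρ x) μ)
    (hρ_one : ∫ x, ρ x ∂μ = 1) (hρ_nonneg : ∀ᵐ x ∂μ, 0 ≤ ρ x)
    (hlog_le : ∀ᵐ x ∂μ, log (ρ x) ≤ C) :
    ∫ x, log (ρ x) * ρ x ∂μ ≤ C :=
  calc ∫ x, log (ρ x) * ρ x ∂μ ≤ ∫ x, C * ρ x ∂μ :=
        integral_mono_ae hlogρ (hρ.const_mul C) <| by
          filter_upwards [hρ_nonneg, hlog_le] with x h0 hC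
          exact mul_le_mul_of_nonneg_right hC h0
    _ = C := by rw [integral_const_mul, hρ_one, mul_one]

theorem setIntegral_log_gibbs_le {α : Type*} [TopologicalSpace α] [T2Space α]
    [MeasurableSpace α] [OpensMeasurableSpace α] {μ : Measure α} [IsFiniteMeasureOnCompacts μ]
    {s : Set α} {f : α → ℝ} {M : ℝ} (hs : IsCompact s) (hf : ContinuousOn f s)
    (hfM : ∀ x ∈ s, f x ≤ M) (hZ : 0 < ∫ x in s, exp (f x) ∂μ) :
    ∫ x in s, log (exp (f x) / ∫ y in s, exp (f y) ∂μ) * (exp (f x) / ∫ y in s, exp (f y) ∂μ) ∂μ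
      ≤ M - log (∫ x in s, exp (f x) ∂μ) := by
  set Z := ∫ x in s, exp (f x) ∂μ
  have hρ : ContinuousOn (fun x => exp (f x) / Z) s :=
    (continuous_exp.comp_continuousOn hf).div_const Z
  refine integral_log_mul_le_of_log_le (hρ.integrableOn_compact hs)
    ((hρ.log fun x _ => (div_pos (exp_pos _) hZ).ne').mul hρ |>.integrableOn_compact hs)
    (by rw [integral_div, div_self hZ.ne']) (ae_of_all _ fun x => by positivity) ?_
  rw [ae_restrict_iff' hs.measurableSet]
  refine ae_of_all _ fun x hx => ?_
  rw [log_div (exp_ne_zero _) hZ.ne', log_exp]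
  linarith [hfM x hx]

theorem exists_Icc_subset_unitCube_closedBall {m : ℕ} {x₀ : Fin m → ℝ} (hx₀ : x₀ ∈ Icc 0 1)
    {δ : ℝ} (hδ₀ : 0 ≤ δ) (hδ₁ : δ ≤ 1) :
    ∃ c : Fin m → ℝ, Icc c (c + fun _ => δ) ⊆ Icc 0 1 ∩ Metric.closedBall x₀ δ := by
  refine ⟨fun i => min (x₀ i) (1 - δ), fun k hk => ⟨⟨fun i => ?_, fun i => ?_⟩, ?_⟩⟩
  · show (0 : ℝ) ≤ k i
    exact (le_min (hx₀.1 i) (sub_nonneg.2 hδ₁)).trans (hk.1 i)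
  · show k i ≤ 1
    have := hk.2 i
    simp only [Pi.add_apply] at this
    linarith [min_le_right (x₀ i) (1 - δ)]
  · have hx₀i : ∀ i, x₀ i ∈ Icc (min (x₀ i) (1 - δ)) (min (x₀ i) (1 - δ) + δ) := fun i =>
      ⟨min_le_left _ _, by
        have : x₀ i - δ ≤ min (x₀ i) (1 - δ) :=
          le_min (sub_le_self _ hδ₀) (sub_le_sub_right (hx₀.2 i) δ)
        linarith⟩
    rw [Metric.mem_closedBall, dist_pi_le_iff hδ₀]
    intro i
    simpa using Real.dist_le_of_mem_Icc ⟨hk.1 i, hk.2 i⟩ (hx₀i i)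

theorem pow_mul_le_setIntegral_unitCube {m : ℕ} {F : (Fin m → ℝ) → ℝ}
    (hF : IntegrableOn F (Icc 0 1)) (hF_nonneg : ∀ x ∈ Icc (0 : Fin m → ℝ) 1, 0 ≤ F x)
    {x₀ : Fin m → ℝ} (hx₀ : x₀ ∈ Icc 0 1) {δ : ℝ} (hδ₀ : 0 ≤ δ) (hδ₁ : δ ≤ 1) {a : ℝ}
    (ha : ∀ x ∈ Icc 0 1 ∩ Metric.closedBall x₀ δ, a ≤ F x) :
    δ ^ m * a ≤ ∫ x in Icc 0 1, F x := by
  obtain ⟨c, hc⟩ := exists_Icc_subset_unitCube_closedBall hx₀ hδ₀ hδ₁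
  have hvol : volume.real (Icc c (c + fun _ => δ)) = δ ^ m := by
    rw [measureReal_def, volume_Icc_pi_toReal fun i => by simp [hδ₀]]
    simp
  calc δ ^ m * a = a * volume.real (Icc c (c + fun _ => δ)) := by rw [hvol, mul_comm]
    _ ≤ ∫ x in Icc c (c + fun _ => δ), F x :=
        setIntegral_ge_of_const_le_real measurableSet_Icc isCompact_Icc.measure_lt_top.ne
          (fun x hx => ha x (hc hx)) (hF.mono_set fun x hx => (hc hx).1)
    _ ≤ ∫ x in Icc 0 1, F x :=
        setIntegral_mono_set hF (ae_restrict_of_forall_mem measurableSet_Icc hF_nonneg)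
          (Filter.Eventually.of_forall fun x hx => (hc hx).1)

theorem le_mul_max_log_of_forall_le {m L η A : ℝ} (hm : 0 ≤ m) (hL : 0 < L) (hη : 0 < η)
    (h : ∀ δ, 0 < δ → δ ≤ 1 → A ≤ L * δ / η - m * log δ) :
    A ≤ m * max (log ((exp 1 * L / m) * η⁻¹)) 1 := by
  rcases hm.eq_or_lt with rfl | hm
  -- for `m = 0` no single `δ` works: let `δ → 0`
  · refine le_of_forall_pos_le_add fun ε hε => ?_
    have hδ : 0 < min 1 (ε * η / L) := lt_min one_pos (by positivity)
    refine (h _ hδ (min_le_left _ _)).trans ?_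
    rw [zero_mul, sub_zero, zero_mul, zero_add, div_le_iff₀ hη, mul_comm, ← le_div_iff₀ hL]
    exact min_le_right _ _
  rcases le_or_gt (m * η) L with hmη | hmη
  · have hδ : 0 < m * η / L := by positivity
    have hlog : log ((exp 1 * L / m) * η⁻¹) = 1 - log (m * η / L) := by
      rw [show (exp 1 * L / m) * η⁻¹ = exp 1 * (m * η / L)⁻¹ by field_simp,
        log_mul (exp_ne_zero _) (by positivity), log_exp, log_inv, sub_eq_add_neg]
    calc A ≤ L * (m * η / L) / η - m * log (m * η / L) :=
          h _ hδ ((div_le_one hL).2 hmη)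
      _ = m * (1 - log (m * η / L)) := by field_simp
      _ ≤ m * max (log ((exp 1 * L / m) * η⁻¹)) 1 := by
          rw [hlog]; exact mul_le_mul_of_nonneg_left (le_max_left _ _) hm.le
  · calc A ≤ L * 1 / η - m * log 1 := h 1 one_pos le_rfl
      _ ≤ m := by rw [log_one, mul_zero, sub_zero, mul_one, div_le_iff₀ hη]; exact hmη.le
      _ ≤ m * max (log ((exp 1 * L / m) * η⁻¹)) 1 :=
          le_mul_of_one_le_right hm.le (le_max_right _ _)

theorem stmt6 (m : ℕ) (Lg : ℝ) (hLg : 0 < Lg) (g : (Fin m → ℝ) → ℝ)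
    (hLip : ∀ x ∈ Set.Icc (0 : Fin m → ℝ) 1, ∀ y ∈ Set.Icc (0 : Fin m → ℝ) 1,
      |g x - g y| ≤ Lg * ‖x - y‖)
    (η : ℝ) (hη : 0 < η)
    (Z : ℝ) (hZ : Z = ∫ k in Set.Icc (0 : Fin m → ℝ) 1, Real.exp (g k / η))
    (ρ : (Fin m → ℝ) → ℝ) (hρ : ∀ k, ρ k = Real.exp (g k / η) / Z) :
    (∫ k in Set.Icc (0 : Fin m → ℝ) 1, Real.log (ρ k) * ρ k) ≤
      (m : ℝ) * max (Real.log ((Real.exp 1 * Lg / m) * η⁻¹)) 1 := by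
  obtain rfl : ρ = fun k => exp (g k / η) / Z := funext hρ
  have hg : ContinuousOn g (Icc 0 1) :=
    (LipschitzOnWith.of_dist_le_mul (K := Lg.toNNReal) fun x hx y hy => by
      simpa [Real.dist_eq, dist_eq_norm, hLg.le] using hLip x hx y hy).continuousOn
  obtain ⟨x₀, hx₀, hmax⟩ := isCompact_Icc.exists_isMaxOn ⟨0, le_rfl, zero_le_one⟩ hg
  have hZ_ge : ∀ δ, 0 < δ → δ ≤ 1 → δ ^ m * exp ((g x₀ - Lg * δ) / η) ≤ Z := fun δ hδ₀ hδ₁ =>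
    hZ ▸ pow_mul_le_setIntegral_unitCube
      ((continuous_exp.comp_continuousOn (hg.div_const η)).integrableOn_compact isCompact_Icc)
      (fun _ _ => (exp_pos _).le) hx₀ hδ₀.le hδ₁ fun x ⟨hx, hxδ⟩ => by
        have := (abs_le.1 (hLip x hx x₀ hx₀)).1
        refine exp_le_exp.2 (div_le_div_of_nonneg_right ?_ hη.le)
        nlinarith [mem_closedBall_iff_norm.1 hxδ]
  have hZ_pos : 0 < Z := (by positivity : (0 : ℝ) < 1 ^ m * _).trans_le (hZ_ge 1 one_pos le_rfl)
  have hKL := setIntegral_log_gibbs_le isCompact_Icc (hg.div_const η)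
    (fun x hx => div_le_div_of_nonneg_right (hmax hx) hη.le) (hZ ▸ hZ_pos)
  rw [← hZ] at hKL
  refine le_mul_max_log_of_forall_le (Nat.cast_nonneg m) hLg hη fun δ hδ₀ hδ₁ => hKL.trans ?_
  have hlogZ := log_le_log (by positivity) (hZ_ge δ hδ₀ hδ₁)
  rw [log_mul (by positivity) (exp_ne_zero _), log_pow, log_exp] at hlogZ
  linarith [show (g x₀ - Lg * δ) / η = g x₀ / η - Lg * δ / η by ring]
end

section
/- Let F := argmax_{p ∈ Δ_N} I(p,W) and S_max := min_{p ∈ F} sᵀp. If S ≥ S_max, then C_S(W) = max{ −rᵀp + H(Wᵀp) : p ∈ Δ_N }. If S < S_max, then C_S(W) = max{ −rᵀp + H(Wᵀp) : p ∈ Δ_N, sᵀp = S }; that is, the average-cost inequality constraint can be replaced by an equality without changing the optimal value. -/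
/-- Shannon entropy (base 2) of a finite nonnegative vector. -/
noncomputable def entropy2 {M : ℕ} (q : Fin M → ℝ) : ℝ :=
  ∑ j, -(q j * Real.logb 2 (q j))

/-- Mutual information (base 2) of an input distribution `p` and a channel matrix `W`. -/
noncomputable def mutualInfoDMC {N M : ℕ} (W : Matrix (Fin N) (Fin M) ℝ)
    (p : Fin N → ℝ) : ℝ :=
  ∑ i, ∑ j, p i * W i j * Real.logb 2 (W i j / ∑ k, p k * W k j)

/-! On the simplex the mutual information `H(Y) - H(Y|X)` equals `J p = -rᵀp + H(Wᵀp)`, a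
continuous function that is concave because `H` is. Let `p₀` be a maximizer of `J` of least cost
`sᵀp₀ = Smax` among all maximizers. If `Smax ≤ S`, then `p₀` is feasible and both suprema equal
`J p₀`. If `S < Smax`, then for every feasible `p` the segment from `p` to `p₀` meets the hyperplane
`sᵀx = S`, and by concavity the value of `J` at that point is at least `min (J p) (J p₀) = J p`. -/

open Real Matrix

section Optimization

variable {E : Type*}

theorem ConcaveOn.exists_eq_and_le_of_le_of_le {𝕜 : Type*} [Field 𝕜] [LinearOrder 𝕜]
    [IsStrictOrderedRing 𝕜] [AddCommGroup E] [Module 𝕜 E] {K : Set E} {J : E → 𝕜}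
    (hJ : ConcaveOn 𝕜 K J) (c : E →ₗ[𝕜] 𝕜) {x y : E} {S : 𝕜} (hx : x ∈ K) (hy : y ∈ K)
    (hJxy : J x ≤ J y) (hxS : c x ≤ S) (hSy : S ≤ c y) :
    ∃ z ∈ K, c z = S ∧ J x ≤ J z := by
  have hS : S ∈ c.toAffineMap '' segment 𝕜 x y := by
    rw [image_segment, LinearMap.coe_toAffineMap, segment_eq_Icc (hxS.trans hSy)]
    exact ⟨hxS, hSy⟩
  obtain ⟨z, hz, rfl⟩ := hS
  refine ⟨z, hJ.1.segment_subset hx hy hz, rfl, ?_⟩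
  simpa [hJxy] using hJ.min_le_of_mem_segment hx hy hz

variable {K : Set E} {J c : E → ℝ} {p₀ : E} {S : ℝ}

theorem IsCompact.sep_isMaxOn [TopologicalSpace E] (hK : IsCompact K) (hJ : Continuous J) :
    IsCompact {p ∈ K | IsMaxOn J K p} := by
  have : {p ∈ K | IsMaxOn J K p} = K ∩ ⋂ q ∈ K, {p | J q ≤ J p} := by
    ext p; simp [isMaxOn_iff]
  rw [this]
  exact hK.inter_right (isClosed_biInter fun q _ => isClosed_le continuous_const hJ)

theorem sSup_setOf_le_eq_of_isMaxOn (hp₀ : p₀ ∈ K) (hmax : IsMaxOn J K p₀) (hS : c p₀ ≤ S) :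
    sSup {t | ∃ p ∈ K, c p ≤ S ∧ t = J p} = sSup {t | ∃ p ∈ K, t = J p} := by
  refine csSup_eq_csSup_of_forall_exists_le ?_ ?_
  · rintro _ ⟨p, hp, -, rfl⟩
    exact ⟨J p, ⟨p, hp, rfl⟩, le_rfl⟩
  · rintro _ ⟨p, hp, rfl⟩
    exact ⟨J p₀, ⟨p₀, hp₀, hS, rfl⟩, hmax hp⟩

theorem ConcaveOn.sSup_setOf_le_eq_sSup_setOf_eq [AddCommGroup E] [Module ℝ E]
    (hJ : ConcaveOn ℝ K J) (c : E →ₗ[ℝ] ℝ) (hp₀ : p₀ ∈ K) (hmax : IsMaxOn J K p₀)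
    (hS : S ≤ c p₀) :
    sSup {t | ∃ p ∈ K, c p ≤ S ∧ t = J p} = sSup {t | ∃ p ∈ K, c p = S ∧ t = J p} := by
  refine csSup_eq_csSup_of_forall_exists_le ?_ ?_
  · rintro _ ⟨p, hp, hpS, rfl⟩
    obtain ⟨z, hz, hzS, hpz⟩ := hJ.exists_eq_and_le_of_le_of_le c hp hp₀ (hmax hp) hpS hS
    exact ⟨J z, ⟨z, hz, hzS, rfl⟩, hpz⟩
  · rintro _ ⟨p, hp, hpS, rfl⟩
    exact ⟨J p, ⟨p, hp, hpS.le, rfl⟩, le_rfl⟩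

end Optimization

section Channel

variable {N M : ℕ}

noncomputable def channelObjective (W : Matrix (Fin N) (Fin M) ℝ) (r p : Fin N → ℝ) : ℝ :=
  -(∑ i, r i * p i) + entropy2 (fun j => ∑ i, p i * W i j)

theorem entropy2_eq_sum_negMulLog (q : Fin M → ℝ) :
    entropy2 q = ∑ j, negMulLog (q j) / log 2 :=
  Finset.sum_congr rfl fun j _ => by rw [negMulLog, logb]; ring

theorem concaveOn_entropy2 : ConcaveOn ℝ (Set.Ici 0) (entropy2 (M := M)) := by
  refine ⟨convex_Ici 0, fun q hq q' hq' a b ha hb hab => ?_⟩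
  simp only [entropy2_eq_sum_negMulLog, smul_eq_mul, Finset.mul_sum, ← Finset.sum_add_distrib,
    Pi.add_apply, Pi.smul_apply, ← mul_div_assoc, ← add_div]
  refine Finset.sum_le_sum fun j _ => ?_
  gcongr
  simpa only [smul_eq_mul] using concaveOn_negMulLog.2 (hq j) (hq' j) ha hb hab

theorem continuous_channelObjective (W : Matrix (Fin N) (Fin M) ℝ) (r : Fin N → ℝ) :
    Continuous (channelObjective W r) := by
  unfold channelObjective
  simp only [entropy2_eq_sum_negMulLog]
  fun_prop

theorem concaveOn_channelObjective {W : Matrix (Fin N) (Fin M) ℝ} (hW : ∀ i j, 0 ≤ W i j)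
    (r : Fin N → ℝ) : ConcaveOn ℝ (Set.Ici 0) (channelObjective W r) := by
  have hlin : ConcaveOn ℝ (Set.Ici 0) fun p : Fin N → ℝ => -(dotProductBilin ℝ ℝ r p) :=
    ((dotProductBilin ℝ ℝ r).convexOn (convex_Ici 0)).neg
  have hent : ConcaveOn ℝ (Set.Ici 0) fun p : Fin N → ℝ => entropy2 (p ᵥ* W) :=
    (concaveOn_entropy2.comp_linearMap (vecMulLinear W)).subset
      (fun p hp j => show 0 ≤ ∑ i, p i * W i j from
        Finset.sum_nonneg fun i _ => mul_nonneg (hp i) (hW i j)) (convex_Ici 0)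
  exact hlin.add hent

theorem mutualInfoDMC_eq_channelObjective {W : Matrix (Fin N) (Fin M) ℝ} (hW : ∀ i j, 0 ≤ W i j)
    {r : Fin N → ℝ} (hr : ∀ i, r i = -(∑ j, W i j * logb 2 (W i j))) {p : Fin N → ℝ}
    (hp : 0 ≤ p) : mutualInfoDMC W p = channelObjective W r p := by
  set q : Fin M → ℝ := fun j => ∑ i, p i * W i j
  have hterm : ∀ i j, p i * W i j * logb 2 (W i j / q j)
      = p i * (W i j * logb 2 (W i j)) - p i * W i j * logb 2 (q j) := by
    intro i j
    rcases (mul_nonneg (hp i) (hW i j)).eq_or_lt with h | h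
    · rcases mul_eq_zero.mp h.symm with h0 | h0 <;> simp [h0]
    · have hq : 0 < q j := h.trans_le <|
        Finset.single_le_sum (fun k _ => mul_nonneg (hp k) (hW k j)) (Finset.mem_univ i)
      rw [logb_div (right_ne_zero_of_mul h.ne') hq.ne']
      ring
  calc mutualInfoDMC W p
      = ∑ i, p i * ∑ j, W i j * logb 2 (W i j) - ∑ j, q j * logb 2 (q j) := by
        simp only [mutualInfoDMC, hterm, Finset.sum_sub_distrib, Finset.mul_sum, Finset.sum_mul, q]
        rw [Finset.sum_comm (f := fun i j => p i * W i j * logb 2 (q j))]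
    _ = channelObjective W r p := by
        simp only [channelObjective, entropy2, hr, neg_mul, neg_neg, Finset.sum_neg_distrib, q,
          mul_comm (p _)]
        ring

end Channel

theorem stmt8_general (N M : ℕ) (W : Matrix (Fin N) (Fin M) ℝ)
    (hWnn : ∀ i j, 0 ≤ W i j)
    (s : Fin N → ℝ) (S : ℝ)
    (r : Fin N → ℝ) (hr : ∀ i, r i = -(∑ j, W i j * Real.logb 2 (W i j)))
    (F : Set (Fin N → ℝ))
    (hF : F = {p ∈ stdSimplex ℝ (Fin N) |
      ∀ q ∈ stdSimplex ℝ (Fin N), mutualInfoDMC W q ≤ mutualInfoDMC W p})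
    (Smax : ℝ) (hSmax : Smax = sInf {t | ∃ p ∈ F, t = ∑ i, s i * p i})
    (CS : ℝ) (hCS : CS = sSup {t | ∃ p ∈ stdSimplex ℝ (Fin N),
      (∑ i, s i * p i) ≤ S ∧ t = mutualInfoDMC W p}) :
    (Smax ≤ S →
      CS = sSup {t | ∃ p ∈ stdSimplex ℝ (Fin N),
        t = -(∑ i, r i * p i) + entropy2 (fun j => ∑ i, p i * W i j)}) ∧
    (S < Smax →
      CS = sSup {t | ∃ p ∈ stdSimplex ℝ (Fin N),
        (∑ i, s i * p i) = S ∧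
          t = -(∑ i, r i * p i) + entropy2 (fun j => ∑ i, p i * W i j)}) := by
  set Δ := stdSimplex ℝ (Fin N)
  set J := channelObjective W r
  set c := dotProductBilin ℝ ℝ s
  have hMI : ∀ p ∈ Δ, mutualInfoDMC W p = J p := fun p hp =>
    mutualInfoDMC_eq_channelObjective hWnn hr hp.1
  have hCS' : CS = sSup {t | ∃ p ∈ Δ, c p ≤ S ∧ t = J p} :=
    hCS.trans <| congrArg sSup <| Set.ext fun t =>
      exists_congr fun p => and_congr_right fun hp => by rw [hMI p hp]; rfl
  have hF' : F = {p ∈ Δ | IsMaxOn J Δ p} :=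
    hF.trans <| Set.ext fun p => and_congr_right fun hp => by
      rw [isMaxOn_iff]
      exact forall₂_congr fun q hq => by rw [hMI p hp, hMI q hq]
  rcases Δ.eq_empty_or_nonempty with hΔ | hΔ
  · simp [hCS', hΔ]
  have hΔc : IsCompact Δ := isCompact_stdSimplex _ _
  have hJ : Continuous J := continuous_channelObjective W r
  obtain ⟨p₀, hp₀, hp₀min⟩ := (hΔc.sep_isMaxOn hJ).exists_isMinOn
    (hΔc.exists_isMaxOn hΔ hJ.continuousOn)
    c.continuous_of_finiteDimensional.continuousOn
  have hSmax' : Smax = c p₀ := hSmax.trans <| IsLeast.csInf_eq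
    ⟨⟨p₀, hF' ▸ hp₀, rfl⟩, by rintro _ ⟨p, hp, rfl⟩; exact hp₀min (hF' ▸ hp)⟩
  have hJΔ : ConcaveOn ℝ Δ J :=
    (concaveOn_channelObjective hWnn r).subset (fun p hp => hp.1) (convex_stdSimplex ℝ _)
  rw [hCS', hSmax']
  exact ⟨fun h => sSup_setOf_le_eq_of_isMaxOn hp₀.1 hp₀.2 h,
    fun h => hJΔ.sSup_setOf_le_eq_sSup_setOf_eq c hp₀.1 hp₀.2 h.le⟩

theorem stmt8 (N M : ℕ) (W : Matrix (Fin N) (Fin M) ℝ)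
    (hWnn : ∀ i j, 0 ≤ W i j) (hWrow : ∀ i, ∑ j, W i j = 1)
    (s : Fin N → ℝ) (hs : ∀ i, 0 ≤ s i) (S : ℝ) (hS : 0 ≤ S)
    (r : Fin N → ℝ) (hr : ∀ i, r i = -(∑ j, W i j * Real.logb 2 (W i j)))
    (F : Set (Fin N → ℝ))
    (hF : F = {p ∈ stdSimplex ℝ (Fin N) |
      ∀ q ∈ stdSimplex ℝ (Fin N), mutualInfoDMC W q ≤ mutualInfoDMC W p})
    (Smax : ℝ) (hSmax : Smax = sInf {t | ∃ p ∈ F, t = ∑ i, s i * p i})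
    (CS : ℝ) (hCS : CS = sSup {t | ∃ p ∈ stdSimplex ℝ (Fin N),
      (∑ i, s i * p i) ≤ S ∧ t = mutualInfoDMC W p}) :
    (Smax ≤ S →
      CS = sSup {t | ∃ p ∈ stdSimplex ℝ (Fin N),
        t = -(∑ i, r i * p i) + entropy2 (fun j => ∑ i, p i * W i j)}) ∧
    (S < Smax →
      CS = sSup {t | ∃ p ∈ stdSimplex ℝ (Fin N),
        (∑ i, s i * p i) = S ∧
          t = -(∑ i, r i * p i) + entropy2 (fun j => ∑ i, p i * W i j)}) :=
  stmt8_general N M W hWnn s S r hr F hF Smax hSmax CS hCS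
end

section
/- Assume {p ∈ Δ_N : sᵀp = S} is nonempty. Then strong duality holds: max{ −rᵀp + H(q) : p ∈ Δ_N, q ∈ Δ_M, Wᵀp = q, sᵀp = S } = inf_{λ ∈ ℝ^M} ( G(λ) + F(λ) ). -/
open Real Finset Filter Topology Matrix

lemma entropy2_eq_sum_negMulLog_div {M : ℕ} (q : Fin M → ℝ) :
    entropy2 q = (∑ j, negMulLog (q j)) / log 2 := by
  rw [entropy2, Finset.sum_div]
  refine Finset.sum_congr rfl fun j _ => ?_
  rw [negMulLog, logb]
  ring

lemma continuous_entropy2 {M : ℕ} : Continuous (entropy2 (M := M)) := by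
  simp_rw [funext entropy2_eq_sum_negMulLog_div]
  fun_prop

noncomputable def crossEntropy {ι : Type*} [Fintype ι] (y x : ι → ℝ) : ℝ :=
  ∑ j, y j * -log (x j)

section CrossEntropy

variable {ι : Type*} [Fintype ι]

lemma negMulLog_le_mul_neg_log_add_sub {x z : ℝ} (hx : 0 ≤ x) (hz : 0 < z) :
    negMulLog x ≤ x * -log z + (z - x) := by
  have hsplit := negMulLog_mul z (x / z)
  rw [mul_div_cancel₀ x hz.ne'] at hsplit
  calc negMulLog x = x / z * negMulLog z + z * negMulLog (x / z) := hsplit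
    _ ≤ x / z * negMulLog z + z * (1 - x / z) := by
      gcongr
      exact negMulLog_le_one_sub_self (div_nonneg hx hz.le)
    _ = x * -log z + (z - x) := by
      rw [negMulLog]
      field_simp

lemma sum_negMulLog_le_crossEntropy {x y : ι → ℝ} (hy : ∀ j, 0 ≤ y j) (hx : ∀ j, 0 < x j)
    (hsum : ∑ j, x j = ∑ j, y j) :
    ∑ j, negMulLog (y j) ≤ crossEntropy y x :=
  calc ∑ j, negMulLog (y j) ≤ ∑ j, (y j * -log (x j) + (x j - y j)) :=
        sum_le_sum fun j _ => negMulLog_le_mul_neg_log_add_sub (hy j) (hx j)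
    _ = crossEntropy y x := by
      rw [sum_add_distrib, sum_sub_distrib, hsum, sub_self, add_zero, crossEntropy]

lemma mul_sum_negMulLog_add_mul_crossEntropy_le {x y : ι → ℝ} (hx : ∀ j, 0 ≤ x j)
    (hy : ∀ j, 0 ≤ y j) (hsum : ∑ j, x j = ∑ j, y j) {t : ℝ} (ht₀ : 0 ≤ t) (ht₁ : t < 1) :
    (1 - t) * ∑ j, negMulLog (x j) + t * crossEntropy y ((1 - t) • x + t • y) ≤
      ∑ j, negMulLog (((1 - t) • x + t • y) j) := by
  set z := (1 - t) • x + t • y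
  have hzj : ∀ j, z j = (1 - t) * x j + t * y j := fun j => rfl
  have hpoint : ∀ j, (1 - t) * (negMulLog (x j) - (z j - x j)) + t * (y j * -log (z j)) ≤
      negMulLog (z j) := by
    intro j
    have hsplit : negMulLog (z j) = (1 - t) * (x j * -log (z j)) + t * (y j * -log (z j)) := by
      rw [negMulLog, hzj]
      ring
    rw [hsplit]
    rcases (hx j).eq_or_lt with hx0 | hxpos
    · have : 0 ≤ (1 - t) * (t * y j) := by have := hy j; positivity
      rw [hzj, ← hx0]
      simp only [negMulLog_zero, mul_zero, zero_add, zero_mul]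
      linarith
    · have hzpos : 0 < z j := by
        rw [hzj]
        have := hy j
        have : 0 < (1 - t) * x j := mul_pos (by linarith) hxpos
        positivity
      have := negMulLog_le_mul_neg_log_add_sub (hx j) hzpos
      nlinarith
  have hzsum : ∑ j, z j = ∑ j, x j := by
    simp only [hzj, sum_add_distrib, ← mul_sum, hsum]
    ring
  calc (1 - t) * ∑ j, negMulLog (x j) + t * crossEntropy y z
      = ∑ j, ((1 - t) * (negMulLog (x j) - (z j - x j)) + t * (y j * -log (z j))) := by
        simp only [crossEntropy, sum_add_distrib, mul_sub, sum_sub_distrib, ← mul_sum, hzsum]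
        ring
    _ ≤ ∑ j, negMulLog (z j) := sum_le_sum fun j _ => hpoint j

lemma crossEntropy_mix_le {x y : ι → ℝ} (hx : ∀ j, 0 ≤ x j) (hy : ∀ j, 0 ≤ y j)
    (hsum : ∑ j, x j = ∑ j, y j) {t c : ℝ} (ht : t ∈ Set.Ioo (0 : ℝ) 1)
    (h : ∑ j, negMulLog (((1 - t) • x + t • y) j) ≤ ∑ j, negMulLog (x j) + t * c) :
    crossEntropy y ((1 - t) • x + t • y) ≤ ∑ j, negMulLog (x j) + c := by
  have := mul_sum_negMulLog_add_mul_crossEntropy_le hx hy hsum ht.1.le ht.2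
  nlinarith [ht.1]

lemma eq_zero_of_crossEntropy_mix_le {x y : ι → ℝ} (hx : x ∈ stdSimplex ℝ ι)
    (hy : y ∈ stdSimplex ℝ ι) {C : ℝ}
    (h : ∀ t ∈ Set.Ioo (0 : ℝ) 1, crossEntropy y ((1 - t) • x + t • y) ≤ C) {j : ι}
    (hxj : x j = 0) : y j = 0 := by
  by_contra hyj
  have hypos : 0 < y j := (hy.1 j).lt_of_ne' hyj
  have hscale : Tendsto (fun t => t * y j) (𝓝[>] 0) (𝓝[>] 0) := by
    refine tendsto_nhdsWithin_iff.2 ⟨?_, ?_⟩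
    · have : Tendsto (fun t : ℝ => t * y j) (𝓝 0) (𝓝 0) := by
        simpa using (tendsto_id (x := 𝓝 (0 : ℝ))).mul_const (y j)
      exact this.mono_left nhdsWithin_le_nhds
    · filter_upwards [self_mem_nhdsWithin] with t ht
      exact mul_pos ht hypos
  have hblowup : Tendsto (fun t => y j * -log (t * y j)) (𝓝[>] 0) atTop :=
    (tendsto_neg_atBot_atTop.comp (tendsto_log_nhdsGT_zero.comp hscale)).const_mul_atTop hypos
  obtain ⟨t, hCt, ht⟩ :=
    ((hblowup.eventually_gt_atTop C).and (Ioo_mem_nhdsGT zero_lt_one)).exists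
  have hmix : (1 - t) • x + t • y ∈ stdSimplex ℝ ι :=
    convex_stdSimplex ℝ ι hx hy (by linarith [ht.2]) ht.1.le (by ring)
  have hterm : y j * -log (t * y j) ≤ crossEntropy y ((1 - t) • x + t • y) := by
    have hnonneg : ∀ k, 0 ≤ y k * -log (((1 - t) • x + t • y) k) := fun k =>
      mul_nonneg (hy.1 k) (neg_nonneg.2 (log_nonpos (hmix.1 k) (stdSimplex.le_one ⟨_, hmix⟩ k)))
    have := single_le_sum (fun k _ => hnonneg k) (mem_univ j)
    simp only [Pi.add_apply, Pi.smul_apply, smul_eq_mul, hxj, mul_zero, zero_add] at this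
    exact this
  exact (hCt.trans_le hterm).not_ge (h t ht)

lemma crossEntropy_le_of_crossEntropy_mix_le {x y : ι → ℝ} (hx : x ∈ stdSimplex ℝ ι)
    (hy : y ∈ stdSimplex ℝ ι) {C : ℝ}
    (h : ∀ t ∈ Set.Ioo (0 : ℝ) 1, crossEntropy y ((1 - t) • x + t • y) ≤ C) :
    crossEntropy y x ≤ C := by
  have hlim : Tendsto (fun t : ℝ => crossEntropy y ((1 - t) • x + t • y)) (𝓝[>] 0)
      (𝓝 (crossEntropy y x)) := by
    refine tendsto_finsetSum _ fun j _ => ?_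
    by_cases hyj : y j = 0
    · simp [hyj]
    have hxj : x j ≠ 0 := fun hxj => hyj (eq_zero_of_crossEntropy_mix_le hx hy h hxj)
    have hcont : ContinuousAt (fun t : ℝ => y j * -log ((1 - t) * x j + t * y j)) 0 :=
      continuousAt_const.mul (ContinuousAt.log (by fun_prop) (by simpa using hxj)).neg
    simpa using hcont.tendsto.mono_left nhdsWithin_le_nhds
  refine le_of_tendsto hlim ?_
  filter_upwards [Ioo_mem_nhdsGT zero_lt_one] with t ht
  exact h t ht

lemma exists_pos_crossEntropy_le {x : ι → ℝ} (hx : x ∈ stdSimplex ℝ ι) {ε : ℝ} (hε : 0 < ε) :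
    ∃ x' : ι → ℝ, (∀ j, 0 < x' j) ∧ ∑ j, x' j = 1 ∧ ∀ y ∈ stdSimplex ℝ ι,
      (∀ j, x j = 0 → y j = 0) → crossEntropy y x' ≤ crossEntropy y x + ε := by
  have hcard : (0 : ℝ) < Fintype.card ι := by
    obtain ⟨j, -⟩ := Finset.nonempty_of_sum_ne_zero (hx.2.symm ▸ one_ne_zero : ∑ j, x j ≠ 0)
    exact_mod_cast Fintype.card_pos_iff.2 ⟨j⟩
  set a := exp (-ε)
  have ha₀ : 0 < a := exp_pos _
  have ha₁ : a < 1 := exp_lt_one_iff.2 (neg_lt_zero.2 hε)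
  refine ⟨fun j => a * x j + (1 - a) / Fintype.card ι, fun j => ?_, ?_, fun y hy hsupp => ?_⟩
  · have := hx.1 j
    have : 0 < (1 - a) / Fintype.card ι := div_pos (by linarith) hcard
    positivity
  · rw [sum_add_distrib, ← mul_sum, hx.2, sum_const, card_univ, nsmul_eq_mul]
    field_simp
    ring
  · have hterm : ∀ j, y j * -log (a * x j + (1 - a) / Fintype.card ι) ≤
        y j * -log (x j) + y j * ε := by
      intro j
      rcases (hx.1 j).eq_or_lt with hx0 | hxpos
      · simp [hsupp j hx0.symm]
      · have hle : log (a * x j) ≤ log (a * x j + (1 - a) / Fintype.card ι) :=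
          log_le_log (by positivity) (le_add_of_nonneg_right (div_nonneg (by linarith) hcard.le))
        rw [log_mul ha₀.ne' hxpos.ne', log_exp] at hle
        nlinarith [hy.1 j]
    calc crossEntropy y _ ≤ ∑ j, (y j * -log (x j) + y j * ε) := sum_le_sum fun j _ => hterm j
      _ = crossEntropy y x + ε := by rw [sum_add_distrib, ← sum_mul, hy.2, one_mul, crossEntropy]

end CrossEntropy

lemma vecMul_mem_stdSimplex {ι κ : Type*} [Fintype ι] [Fintype κ] {W : Matrix ι κ ℝ}
    (hWnn : ∀ i j, 0 ≤ W i j) (hWrow : ∀ i, ∑ j, W i j = 1) {p : ι → ℝ}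
    (hp : p ∈ stdSimplex ℝ ι) : p ᵥ* W ∈ stdSimplex ℝ κ := by
  refine ⟨fun j => sum_nonneg fun i _ => mul_nonneg (hp.1 i) (hWnn i j), ?_⟩
  simp only [vecMul, dotProduct]
  rw [sum_comm]
  simp [← mul_sum, hWrow, hp.2]

namespace Channel

variable {ι : Type*} [Fintype ι] {M : ℕ} (W : Matrix ι (Fin M) ℝ) (s r : ι → ℝ) (S : ℝ)

def feasibleInputs : Set (ι → ℝ) :=
  {p | p ∈ stdSimplex ℝ ι ∧ s ⬝ᵥ p = S}

noncomputable def objective (p : ι → ℝ) : ℝ :=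
  -(r ⬝ᵥ p) + entropy2 (p ᵥ* W)

noncomputable def dualG (lam : Fin M → ℝ) : ℝ :=
  sSup {t | ∃ p ∈ stdSimplex ℝ ι, s ⬝ᵥ p = S ∧ t = -(r ⬝ᵥ p) + lam ⬝ᵥ (p ᵥ* W)}

noncomputable def dualF (M : ℕ) (lam : Fin M → ℝ) : ℝ :=
  sSup {t | ∃ q ∈ stdSimplex ℝ (Fin M), t = entropy2 q - lam ⬝ᵥ q}

lemma isCompact_feasibleInputs : IsCompact (feasibleInputs s S) :=
  (isCompact_stdSimplex ℝ ι).inter_right (isClosed_eq (by fun_prop) continuous_const)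

lemma convex_feasibleInputs : Convex ℝ (feasibleInputs s S) :=
  (convex_stdSimplex ℝ ι).inter
    (convex_hyperplane ⟨dotProduct_add s, fun c p => dotProduct_smul c s p⟩ S)

lemma continuous_objective : Continuous (objective W r) := by
  unfold objective
  have := continuous_entropy2 (M := M)
  fun_prop

variable {W s r S}

lemma isGreatest_primal (hWnn : ∀ i j, 0 ≤ W i j) (hWrow : ∀ i, ∑ j, W i j = 1) {p₀ : ι → ℝ}
    (hp₀ : p₀ ∈ feasibleInputs s S) (hmax : IsMaxOn (objective W r) (feasibleInputs s S) p₀) :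
    IsGreatest {t | ∃ p ∈ stdSimplex ℝ ι, ∃ q ∈ stdSimplex ℝ (Fin M),
      (∀ j, (p ᵥ* W) j = q j) ∧ s ⬝ᵥ p = S ∧ t = -(r ⬝ᵥ p) + entropy2 q} (objective W r p₀) := by
  refine ⟨⟨p₀, hp₀.1, _, vecMul_mem_stdSimplex hWnn hWrow hp₀.1, fun j => rfl, hp₀.2, rfl⟩, ?_⟩
  rintro _ ⟨p, hp, q, -, hpq, hpS, rfl⟩
  obtain rfl : p ᵥ* W = q := funext hpq
  exact hmax ⟨hp, hpS⟩

lemma crossEntropy_le_of_isMaxOn (hWnn : ∀ i j, 0 ≤ W i j) (hWrow : ∀ i, ∑ j, W i j = 1)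
    {p₀ p : ι → ℝ} (hp₀ : p₀ ∈ feasibleInputs s S)
    (hmax : IsMaxOn (objective W r) (feasibleInputs s S) p₀) (hp : p ∈ feasibleInputs s S) :
    (∀ j, (p₀ ᵥ* W) j = 0 → (p ᵥ* W) j = 0) ∧
      crossEntropy (p ᵥ* W) (p₀ ᵥ* W) ≤
        ∑ j, negMulLog ((p₀ ᵥ* W) j) + log 2 * (r ⬝ᵥ p - r ⬝ᵥ p₀) := by
  have hx := vecMul_mem_stdSimplex hWnn hWrow hp₀.1
  have hy := vecMul_mem_stdSimplex hWnn hWrow hp.1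
  have hmix : ∀ t ∈ Set.Ioo (0 : ℝ) 1,
      crossEntropy (p ᵥ* W) ((1 - t) • (p₀ ᵥ* W) + t • (p ᵥ* W)) ≤
        ∑ j, negMulLog ((p₀ ᵥ* W) j) + log 2 * (r ⬝ᵥ p - r ⬝ᵥ p₀) := by
    intro t ht
    refine crossEntropy_mix_le hx.1 hy.1 (hx.2.trans hy.2.symm) ht ?_
    have hpt : (1 - t) • p₀ + t • p ∈ feasibleInputs s S :=
      convex_feasibleInputs s S hp₀ hp (by linarith [ht.2]) ht.1.le (by ring)
    have hle : objective W r ((1 - t) • p₀ + t • p) ≤ objective W r p₀ := hmax hpt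
    simp only [objective, add_vecMul, smul_vecMul, dotProduct_add,
      dotProduct_smul, smul_eq_mul, entropy2_eq_sum_negMulLog_div] at hle
    have hlog2 : 0 < log 2 := log_pos one_lt_two
    have key : (∑ j, negMulLog (((1 - t) • (p₀ ᵥ* W) + t • (p ᵥ* W)) j)) / log 2 ≤
        (∑ j, negMulLog ((p₀ ᵥ* W) j)) / log 2 + t * (r ⬝ᵥ p - r ⬝ᵥ p₀) := by
      linarith
    rw [div_le_iff₀ hlog2, add_mul, div_mul_cancel₀ _ hlog2.ne'] at key
    linarith
  exact ⟨fun j hj => eq_zero_of_crossEntropy_mix_le hx hy hmix hj,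
    crossEntropy_le_of_crossEntropy_mix_le hx hy hmix⟩

lemma objective_le_dualG_add_dualF (hWnn : ∀ i j, 0 ≤ W i j) (hWrow : ∀ i, ∑ j, W i j = 1)
    {p₀ : ι → ℝ} (hp₀ : p₀ ∈ feasibleInputs s S) (lam : Fin M → ℝ) :
    objective W r p₀ ≤ dualG W s r S lam + dualF M lam := by
  have hG : -(r ⬝ᵥ p₀) + lam ⬝ᵥ (p₀ ᵥ* W) ≤ dualG W s r S lam := by
    refine le_csSup (((isCompact_feasibleInputs s S).bddAbove_image
      (f := fun p => -(r ⬝ᵥ p) + lam ⬝ᵥ (p ᵥ* W)) (by fun_prop)).mono ?_) ⟨p₀, hp₀.1, hp₀.2, rfl⟩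
    rintro _ ⟨p, hp, hpS, rfl⟩
    exact ⟨p, ⟨hp, hpS⟩, rfl⟩
  have hF : entropy2 (p₀ ᵥ* W) - lam ⬝ᵥ (p₀ ᵥ* W) ≤ dualF M lam := by
    have := continuous_entropy2 (M := M)
    refine le_csSup (((isCompact_stdSimplex ℝ (Fin M)).bddAbove_image
      (f := fun q => entropy2 q - lam ⬝ᵥ q) (by fun_prop)).mono ?_)
      ⟨_, vecMul_mem_stdSimplex hWnn hWrow hp₀.1, rfl⟩
    rintro _ ⟨q, hq, rfl⟩
    exact ⟨q, hq, rfl⟩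
  rw [objective]
  linarith

lemma exists_dualG_add_dualF_le (hWnn : ∀ i j, 0 ≤ W i j) (hWrow : ∀ i, ∑ j, W i j = 1)
    {p₀ : ι → ℝ} (hp₀ : p₀ ∈ feasibleInputs s S)
    (hmax : IsMaxOn (objective W r) (feasibleInputs s S) p₀) {ε : ℝ} (hε : 0 < ε) :
    ∃ lam, dualG W s r S lam + dualF M lam ≤ objective W r p₀ + ε := by
  have hlog2 : 0 < log 2 := log_pos one_lt_two
  obtain ⟨x', hx'pos, hx'sum, hx'le⟩ :=
    exists_pos_crossEntropy_le (vecMul_mem_stdSimplex hWnn hWrow hp₀.1) (mul_pos hε hlog2)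
  set lam : Fin M → ℝ := fun j => -logb 2 (x' j)
  have hlam : ∀ q, lam ⬝ᵥ q = crossEntropy q x' / log 2 := by
    intro q
    simp only [lam, dotProduct, crossEntropy, logb, sum_div]
    exact sum_congr rfl fun j _ => by ring
  have hF : dualF M lam ≤ 0 := by
    refine csSup_le ⟨_, x', ⟨fun j => (hx'pos j).le, hx'sum⟩, rfl⟩ ?_
    rintro _ ⟨q, hq, rfl⟩
    rw [hlam, entropy2_eq_sum_negMulLog_div, ← sub_div]
    exact div_nonpos_of_nonpos_of_nonneg
      (sub_nonpos.2 (sum_negMulLog_le_crossEntropy hq.1 hx'pos (hx'sum.trans hq.2.symm)))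
      hlog2.le
  have hG : dualG W s r S lam ≤ objective W r p₀ + ε := by
    refine csSup_le ⟨_, p₀, hp₀.1, hp₀.2, rfl⟩ ?_
    rintro _ ⟨p, hp, hpS, rfl⟩
    obtain ⟨hsupp, hce⟩ := crossEntropy_le_of_isMaxOn hWnn hWrow hp₀ hmax ⟨hp, hpS⟩
    have hce' := hx'le _ (vecMul_mem_stdSimplex hWnn hWrow hp) hsupp
    have hdiv : crossEntropy (p ᵥ* W) x' / log 2 ≤
        (∑ j, negMulLog ((p₀ ᵥ* W) j)) / log 2 + (r ⬝ᵥ p - r ⬝ᵥ p₀) + ε := by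
      rw [div_le_iff₀ hlog2, add_mul, add_mul, div_mul_cancel₀ _ hlog2.ne']
      linarith
    rw [hlam, objective, entropy2_eq_sum_negMulLog_div]
    linarith
  exact ⟨lam, by linarith⟩

end Channel

theorem stmt11_general (N M : ℕ) (W : Matrix (Fin N) (Fin M) ℝ)
    (hWnn : ∀ i j, 0 ≤ W i j) (hWrow : ∀ i, ∑ j, W i j = 1)
    (s : Fin N → ℝ) (S : ℝ)
    (r : Fin N → ℝ)
    -- feasibility of the primal constraint set
    (hfeas : ∃ p ∈ stdSimplex ℝ (Fin N), (∑ i, s i * p i) = S)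
    (F G : (Fin M → ℝ) → ℝ)
    (hF : ∀ lam, F lam = sSup {t | ∃ q ∈ stdSimplex ℝ (Fin M),
      t = entropy2 q - ∑ j, lam j * q j})
    (hG : ∀ lam, G lam = sSup {t | ∃ p ∈ stdSimplex ℝ (Fin N),
      (∑ i, s i * p i) = S ∧
        t = -(∑ i, r i * p i) + ∑ j, lam j * (∑ i, p i * W i j)}) :
    sSup {t | ∃ p ∈ stdSimplex ℝ (Fin N), ∃ q ∈ stdSimplex ℝ (Fin M),
        (∀ j, ∑ i, p i * W i j = q j) ∧ (∑ i, s i * p i) = S ∧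
          t = -(∑ i, r i * p i) + entropy2 q} =
      sInf {t | ∃ lam : Fin M → ℝ, t = G lam + F lam} := by
  obtain rfl : F = Channel.dualF M := funext hF
  obtain rfl : G = Channel.dualG W s r S := funext hG
  obtain ⟨p, hp, hpS⟩ := hfeas
  obtain ⟨p₀, hp₀, hmax⟩ := (Channel.isCompact_feasibleInputs s S).exists_isMaxOn ⟨p, hp, hpS⟩
    (Channel.continuous_objective W r).continuousOn
  have hdual : sInf {t | ∃ lam, t = Channel.dualG W s r S lam + Channel.dualF M lam} =
      Channel.objective W r p₀ := by
    refine csInf_eq_of_forall_ge_of_forall_gt_exists_lt ⟨_, 0, rfl⟩ ?_ fun w hw => ?_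
    · rintro _ ⟨lam, rfl⟩
      exact Channel.objective_le_dualG_add_dualF hWnn hWrow hp₀ lam
    · obtain ⟨lam, hlam⟩ :=
        Channel.exists_dualG_add_dualF_le hWnn hWrow hp₀ hmax (half_pos (sub_pos.2 hw))
      exact ⟨_, ⟨lam, rfl⟩, by linarith⟩
  exact (Channel.isGreatest_primal hWnn hWrow hp₀ hmax).csSup_eq.trans hdual.symm

theorem stmt11 (N M : ℕ) (W : Matrix (Fin N) (Fin M) ℝ)
    (hWnn : ∀ i j, 0 ≤ W i j) (hWrow : ∀ i, ∑ j, W i j = 1)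
    (s : Fin N → ℝ) (hs : ∀ i, 0 ≤ s i) (S : ℝ) (hS : 0 ≤ S)
    (r : Fin N → ℝ) (hr : ∀ i, r i = -(∑ j, W i j * Real.logb 2 (W i j)))
    -- feasibility of the primal constraint set
    (hfeas : ∃ p ∈ stdSimplex ℝ (Fin N), (∑ i, s i * p i) = S)
    (F G : (Fin M → ℝ) → ℝ)
    (hF : ∀ lam, F lam = sSup {t | ∃ q ∈ stdSimplex ℝ (Fin M),
      t = entropy2 q - ∑ j, lam j * q j})
    (hG : ∀ lam, G lam = sSup {t | ∃ p ∈ stdSimplex ℝ (Fin N),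
      (∑ i, s i * p i) = S ∧
        t = -(∑ i, r i * p i) + ∑ j, lam j * (∑ i, p i * W i j)}) :
    sSup {t | ∃ p ∈ stdSimplex ℝ (Fin N), ∃ q ∈ stdSimplex ℝ (Fin M),
        (∀ j, ∑ i, p i * W i j = q j) ∧ (∑ i, s i * p i) = S ∧
          t = -(∑ i, r i * p i) + entropy2 q} =
      sInf {t | ∃ lam : Fin M → ℝ, t = G lam + F lam} :=
  stmt11_general N M W hWnn hWrow s S r hfeas F G hF hG
end

section
/- Assume {p ∈ Δ_N : sᵀp = S} is nonempty and let ν > 0. Then G_ν is well defined, convex, and continuously differentiable at every λ ∈ ℝ^M, its gradient is ∇G_ν(λ) = Wᵀ p_ν(λ) where p_ν(λ) is the unique maximizer defining G_ν(λ), and ∇G_ν is Lipschitz continuous with Lipschitz constant 1/ν with respect to the Euclidean norm. -/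
/-!
In `p`, the objective `⟪λ, Wᵀp⟫ - rᵀp + ν H(p)` is a linear term plus `ν H`, and the base-2
entropy `H` is `(1 / log 2)`-strongly concave on the simplex for the ℓ¹ norm: along a segment with
direction `u`, the second derivative of the natural-log entropy is `-∑ uᵢ² / pᵢ ≤ -‖u‖₁²` by
Cauchy–Schwarz, as `∑ pᵢ = 1`. So the maximizer `p_ν(λ)` exists by compactness and is unique, and
`G_ν`, a pointwise maximum of affine functions of `λ`, is convex. Adding the strong-optimality
inequalities of `p_ν(a)` and `p_ν(b)` gives `ν ‖p_ν(a) - p_ν(b)‖₁² ≤ ⟪a - b, Wᵀ(p_ν(a) - p_ν(b))⟫`;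
as `Wᵀ` is nonexpansive from ℓ¹ to ℓ² for a stochastic `W`, `λ ↦ Wᵀ p_ν(λ)` is `1/ν`-Lipschitz.
Finally `G_ν(b) - G_ν(a) - ⟪Wᵀ p_ν(a), b - a⟫` lies between `0` and
`⟪b - a, Wᵀ(p_ν(b) - p_ν(a))⟫ ≤ ‖b - a‖² / ν`, which gives the gradient. This is Nesterov's
smoothing theorem (*Smooth minimization of non-smooth functions*, 2005, Thm. 1).
-/

open Real Finset Filter Topology Set
open scoped RealInnerProductSpace

section StrongConcavity

variable {X : Type*} [NormedAddCommGroup X] [NormedSpace ℝ X] {s t : Set X} {m c : ℝ}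
  {f g : X → ℝ} {x y : X}

lemma StrongConcaveOn.subset (hf : StrongConcaveOn s m f) (hts : t ⊆ s) (ht : Convex ℝ t) :
    StrongConcaveOn t m f :=
  ⟨ht, fun _ hx _ hy _ _ ha hb hab ↦ hf.2 (hts hx) (hts hy) ha hb hab⟩

lemma StrongConcaveOn.add_concaveOn (hf : StrongConcaveOn s m f) (hg : ConcaveOn ℝ s g) :
    StrongConcaveOn s m (f + g) := by
  have := hf.add hg.uniformConcaveOn_zero
  rwa [add_zero] at this

lemma StrongConcaveOn.const_mul (hf : StrongConcaveOn s m f) (hc : 0 ≤ c) :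
    StrongConcaveOn s (c * m) fun x ↦ c * f x := by
  refine ⟨hf.1, fun x hx y hy a b ha hb hab ↦ ?_⟩
  have := mul_le_mul_of_nonneg_left (hf.2 hx hy ha hb hab) hc
  simp only [smul_eq_mul] at this ⊢
  linarith

lemma StrongConcaveOn.add_sq_le_of_isMaxOn (hf : StrongConcaveOn s m f) (hx : x ∈ s)
    (hmax : IsMaxOn f s x) (hy : y ∈ s) : f y + m / 2 * ‖y - x‖ ^ 2 ≤ f x := by
  have hseg : ∀ t ∈ Ioo (0 : ℝ) 1, (1 - t) * (m / 2 * ‖y - x‖ ^ 2) ≤ f x - f y := by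
    rintro t ⟨ht0, ht1⟩
    have hmem := hf.1 hx hy (sub_nonneg.2 ht1.le) ht0.le (sub_add_cancel 1 t)
    have hconc := hf.2 hx hy (sub_nonneg.2 ht1.le) ht0.le (sub_add_cancel 1 t)
    rw [norm_sub_rev, smul_eq_mul, smul_eq_mul] at hconc
    have hle := hconc.trans (hmax hmem)
    refine le_of_mul_le_mul_left ?_ ht0
    linarith
  have hlim : Tendsto (fun t : ℝ ↦ (1 - t) * (m / 2 * ‖y - x‖ ^ 2)) (𝓝[>] 0)
      (𝓝 (m / 2 * ‖y - x‖ ^ 2)) :=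
    ((by fun_prop : Continuous fun t : ℝ ↦ (1 - t) * (m / 2 * ‖y - x‖ ^ 2)).tendsto' 0 _
      (by simp)).mono_left nhdsWithin_le_nhds
  linarith [le_of_tendsto hlim (eventually_of_mem (Ioo_mem_nhdsGT one_pos) hseg)]

end StrongConcavity

lemma IsMaxOn.sSup_setOf_eq {α : Type*} {f : α → ℝ} {s : Set α} {a : α} (hmax : IsMaxOn f s a)
    (ha : a ∈ s) : sSup {t | ∃ x ∈ s, t = f x} = f a :=
  IsGreatest.csSup_eq ⟨⟨a, ha, rfl⟩, by rintro _ ⟨x, hx, rfl⟩; exact hmax hx⟩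

section Gradient

variable {E : Type*} [NormedAddCommGroup E] [InnerProductSpace ℝ E] [CompleteSpace E]

lemma hasGradientAt_of_abs_sub_inner_le {g : E → ℝ} {v a : E} {C : ℝ}
    (h : ∀ b, |g b - g a - ⟪v, b - a⟫| ≤ C * ‖b - a‖ ^ 2) : HasGradientAt g v a := by
  rw [hasGradientAt_iff_isLittleO]
  have hsq : (fun b ↦ ‖b - a‖ ^ 2) =o[𝓝 a] fun b ↦ b - a :=
    (Asymptotics.isLittleO_norm_pow_id one_lt_two).comp_tendsto
      (tendsto_sub_nhds_zero_iff.2 tendsto_id)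
  refine (Asymptotics.IsBigO.of_bound C (Eventually.of_forall fun b ↦ ?_)).trans_isLittleO hsq
  simpa [abs_of_nonneg (sq_nonneg ‖b - a‖)] using h b

lemma contDiff_one_of_hasGradientAt {g : E → ℝ} {g' : E → E}
    (hg : ∀ x, HasGradientAt g (g' x) x) (hc : Continuous g') : ContDiff ℝ 1 g :=
  contDiff_one_iff_hasFDerivAt.2 ⟨fun x ↦ InnerProductSpace.toDual ℝ E (g' x),
    (InnerProductSpace.toDual ℝ E).continuous.comp hc, fun x ↦ (hg x).hasFDerivAt⟩

end Gradient

section Smoothing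

variable {E X : Type*} [NormedAddCommGroup E] [InnerProductSpace ℝ E]
  [NormedAddCommGroup X] [NormedSpace ℝ X] {A : X →ₗ[ℝ] E} {h : X → ℝ} {D : Set X}
  {p : E → X} {G : E → ℝ} {σ L : ℝ}

lemma StrongConcaveOn.inner_add (hh : StrongConcaveOn D σ h) (A : X →ₗ[ℝ] E) (l : E) :
    StrongConcaveOn D σ fun x ↦ ⟪l, A x⟫ + h x := by
  convert hh.add_concaveOn ((innerₛₗ ℝ l ∘ₗ A).concaveOn hh.1) using 1
  ext x
  simp [add_comm]

namespace NesterovSmoothing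

lemma convexOn (hmax : ∀ l, p l ∈ D ∧ IsMaxOn (fun x ↦ ⟪l, A x⟫ + h x) D (p l))
    (hG : ∀ l, G l = ⟪l, A (p l)⟫ + h (p l)) : ConvexOn ℝ univ G := by
  refine ⟨convex_univ, fun a _ b _ θ τ hθ hτ hθτ ↦ ?_⟩
  set x := p (θ • a + τ • b)
  have ha : ⟪a, A x⟫ + h x ≤ G a := (hG a).symm ▸ (hmax a).2 (hmax _).1
  have hb : ⟪b, A x⟫ + h x ≤ G b := (hG b).symm ▸ (hmax b).2 (hmax _).1
  rw [hG, inner_add_left, real_inner_smul_left, real_inner_smul_left, smul_eq_mul, smul_eq_mul]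
  calc θ * ⟪a, A x⟫ + τ * ⟪b, A x⟫ + h x
      = θ * (⟪a, A x⟫ + h x) + τ * (⟪b, A x⟫ + h x) := by linear_combination (-h x) * hθτ
    _ ≤ θ * G a + τ * G b := by gcongr

lemma sq_norm_sub_le_inner (hh : StrongConcaveOn D σ h)
    (hmax : ∀ l, p l ∈ D ∧ IsMaxOn (fun x ↦ ⟪l, A x⟫ + h x) D (p l)) (a b : E) :
    σ * ‖p a - p b‖ ^ 2 ≤ ⟪a - b, A (p a) - A (p b)⟫ := by
  have ha := (hh.inner_add A a).add_sq_le_of_isMaxOn (hmax a).1 (hmax a).2 (hmax b).1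
  have hb := (hh.inner_add A b).add_sq_le_of_isMaxOn (hmax b).1 (hmax b).2 (hmax a).1
  rw [norm_sub_rev] at ha
  rw [inner_sub_left, inner_sub_right, inner_sub_right]
  linarith

lemma norm_sub_le (hσ : 0 < σ) (hA : ∀ x, ‖A x‖ ≤ L * ‖x‖) (hh : StrongConcaveOn D σ h)
    (hmax : ∀ l, p l ∈ D ∧ IsMaxOn (fun x ↦ ⟪l, A x⟫ + h x) D (p l)) (a b : E) :
    ‖A (p a) - A (p b)‖ ≤ L ^ 2 / σ * ‖a - b‖ := by
  have hmono := sq_norm_sub_le_inner hh hmax a b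
  have hAd : ‖A (p a) - A (p b)‖ ≤ L * ‖p a - p b‖ := by rw [← map_sub]; exact hA _
  have hcs : ⟪a - b, A (p a) - A (p b)⟫ ≤ ‖a - b‖ * (L * ‖p a - p b‖) :=
    (real_inner_le_norm _ _).trans (by gcongr)
  rw [div_mul_eq_mul_div, le_div_iff₀ hσ]
  rcases (norm_nonneg (p a - p b)).eq_or_lt with hd | hd
  · rw [← hd, mul_zero] at hAd
    nlinarith [norm_nonneg (A (p a) - A (p b)), norm_nonneg (a - b)]
  · have hL : 0 ≤ L := by nlinarith [norm_nonneg (A (p a) - A (p b))]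
    have hσd : σ * ‖p a - p b‖ ≤ L * ‖a - b‖ := le_of_mul_le_mul_right (by nlinarith) hd
    nlinarith

lemma eq_of_apply_eq (hσ : 0 < σ) (hh : StrongConcaveOn D σ h)
    (hmax : ∀ l, p l ∈ D ∧ IsMaxOn (fun x ↦ ⟪l, A x⟫ + h x) D (p l))
    (hG : ∀ l, G l = ⟪l, A (p l)⟫ + h (p l)) {l : E} {x : X} (hx : x ∈ D)
    (hxG : ⟪l, A x⟫ + h x = G l) : x = p l :=
  ((hh.inner_add A l).strictConcaveOn hσ).eq_of_isMaxOn
    (fun y hy ↦ by beta_reduce; rw [hxG, hG]; exact (hmax l).2 hy) (hmax l).2 hx (hmax l).1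

lemma hasGradientAt [CompleteSpace E] (hσ : 0 < σ) (hA : ∀ x, ‖A x‖ ≤ L * ‖x‖)
    (hh : StrongConcaveOn D σ h)
    (hmax : ∀ l, p l ∈ D ∧ IsMaxOn (fun x ↦ ⟪l, A x⟫ + h x) D (p l))
    (hG : ∀ l, G l = ⟪l, A (p l)⟫ + h (p l)) (a : E) : HasGradientAt G (A (p a)) a := by
  refine hasGradientAt_of_abs_sub_inner_le (C := L ^ 2 / σ) fun b ↦ abs_le.2 ⟨?_, ?_⟩
  · have hlow : ⟪b, A (p a)⟫ + h (p a) ≤ ⟪b, A (p b)⟫ + h (p b) := (hmax b).2 (hmax a).1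
    have hC : 0 ≤ L ^ 2 / σ * ‖b - a‖ ^ 2 := by positivity
    simp only [hG, real_inner_comm _ (A (p a)), inner_sub_left]
    linarith
  · have hup : ⟪a, A (p b)⟫ + h (p b) ≤ ⟪a, A (p a)⟫ + h (p a) := (hmax a).2 (hmax b).1
    have hcs := (real_inner_le_norm (b - a) (A (p b) - A (p a))).trans
      (mul_le_mul_of_nonneg_left (norm_sub_le hσ hA hh hmax b a) (norm_nonneg _))
    simp only [hG, real_inner_comm _ (A (p a)), inner_sub_left, inner_sub_right] at hcs ⊢
    nlinarith

lemma contDiff_one [CompleteSpace E] (hσ : 0 < σ) (hA : ∀ x, ‖A x‖ ≤ L * ‖x‖)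
    (hh : StrongConcaveOn D σ h)
    (hmax : ∀ l, p l ∈ D ∧ IsMaxOn (fun x ↦ ⟪l, A x⟫ + h x) D (p l))
    (hG : ∀ l, G l = ⟪l, A (p l)⟫ + h (p l)) : ContDiff ℝ 1 G :=
  contDiff_one_of_hasGradientAt (hasGradientAt hσ hA hh hmax hG)
    (LipschitzWith.of_dist_le' fun a b ↦ by
      simpa only [dist_eq_norm] using norm_sub_le hσ hA hh hmax a b).continuous

end NesterovSmoothing

end Smoothing

section Entropy

variable {ι : Type*} [Fintype ι]

lemma hasDerivAt_negMulLog_affine {a u τ : ℝ} (h : u ≠ 0 → 0 < a + τ * u) :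
    HasDerivAt (fun τ ↦ negMulLog (a + τ * u)) ((-log (a + τ * u) - 1) * u) τ := by
  rcases eq_or_ne u 0 with rfl | hu
  · simpa using hasDerivAt_const τ (negMulLog a)
  · have := (hasDerivAt_negMulLog (h hu).ne').comp τ
      (((hasDerivAt_id τ).mul_const u).const_add a)
    rwa [one_mul] at this

lemma hasDerivAt_neg_log_affine_sub_one_mul {a u τ : ℝ} (h : u ≠ 0 → 0 < a + τ * u) :
    HasDerivAt (fun τ ↦ (-log (a + τ * u) - 1) * u) (-(u ^ 2 / (a + τ * u))) τ := by
  rcases eq_or_ne u 0 with rfl | hu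
  · simpa using hasDerivAt_const τ (0 : ℝ)
  · exact (((((hasDerivAt_id τ).mul_const u).const_add a).log (h hu).ne').neg.sub_const 1
      |>.mul_const u).congr_deriv (by simp; ring)

lemma sq_sum_abs_le_sum_sq_div {u w : ι → ℝ} (hw : ∀ i, 0 ≤ w i)
    (hwu : ∀ i, u i ≠ 0 → 0 < w i) (hsum : ∑ i, w i = 1) :
    (∑ i, |u i|) ^ 2 ≤ ∑ i, u i ^ 2 / w i := by
  have hsplit : ∑ i, |u i| = ∑ i, √(w i) * (|u i| / √(w i)) := sum_congr rfl fun i _ ↦ by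
    rcases eq_or_ne (u i) 0 with hu | hu
    · simp [hu]
    · rw [mul_div_cancel₀ _ (sqrt_pos.2 (hwu i hu)).ne']
  calc (∑ i, |u i|) ^ 2 ≤ (∑ i, √(w i) ^ 2) * ∑ i, (|u i| / √(w i)) ^ 2 :=
        hsplit ▸ sum_mul_sq_le_sq_mul_sq _ _ _
    _ = ∑ i, u i ^ 2 / w i := by simp [sq_sqrt, hw, div_pow, hsum]

lemma concaveOn_sum_negMulLog_segment_add_sq {x y : ι → ℝ} (hx : x ∈ stdSimplex ℝ ι)
    (hy : y ∈ stdSimplex ℝ ι) :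
    ConcaveOn ℝ (Icc 0 1) fun τ ↦
      ∑ i, negMulLog (x i + τ * (y i - x i)) + (∑ i, |y i - x i|) ^ 2 / 2 * τ ^ 2 := by
  have hnn : ∀ τ ∈ Ioo (0 : ℝ) 1, ∀ i, 0 ≤ x i + τ * (y i - x i) := fun τ hτ i ↦ by
    nlinarith [hx.1 i, hy.1 i, hτ.1, hτ.2]
  have hpos : ∀ τ ∈ Ioo (0 : ℝ) 1, ∀ i, y i - x i ≠ 0 → 0 < x i + τ * (y i - x i) := by
    intro τ hτ i hi
    refine (hnn τ hτ i).lt_of_ne fun h0 ↦ hi ?_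
    nlinarith [hx.1 i, hy.1 i, hτ.1, hτ.2]
  refine concaveOn_of_hasDerivWithinAt2_nonpos (convex_Icc 0 1) (by fun_prop)
    (f' := fun τ ↦ ∑ i, (-log (x i + τ * (y i - x i)) - 1) * (y i - x i) +
      (∑ i, |y i - x i|) ^ 2 * τ)
    (f'' := fun τ ↦ -∑ i, (y i - x i) ^ 2 / (x i + τ * (y i - x i)) + (∑ i, |y i - x i|) ^ 2)
    ?_ ?_ ?_ <;> rw [interior_Icc] <;> intro τ hτ
  · exact (HasDerivAt.fun_add (HasDerivAt.fun_sum fun i _ ↦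
      hasDerivAt_negMulLog_affine (hpos τ hτ i))
      (((hasDerivAt_pow 2 τ).const_mul ((∑ i, |y i - x i|) ^ 2 / 2)).congr_deriv
        (by simp; ring))).hasDerivWithinAt
  · exact ((HasDerivAt.fun_add (HasDerivAt.fun_sum fun i _ ↦
      hasDerivAt_neg_log_affine_sub_one_mul (hpos τ hτ i))
      ((hasDerivAt_id τ).const_mul ((∑ i, |y i - x i|) ^ 2))).congr_deriv
        (by simp)).hasDerivWithinAt
  · have hsum : ∑ i, (x i + τ * (y i - x i)) = 1 := by
      simp [sum_add_distrib, ← mul_sum, hx.2, hy.2]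
    linarith [sq_sum_abs_le_sum_sq_div (hnn τ hτ) (hpos τ hτ) hsum]

theorem strongConcaveOn_sum_negMulLog :
    StrongConcaveOn (WithLp.ofLp ⁻¹' stdSimplex ℝ ι : Set (WithLp 1 (ι → ℝ))) 1
      fun x ↦ ∑ i, negMulLog (x i) := by
  refine ⟨(convex_stdSimplex ℝ ι).linear_preimage (WithLp.linearEquiv 1 ℝ (ι → ℝ)).toLinearMap,
    fun x hx y hy a b ha hb hab ↦ ?_⟩
  obtain rfl : a = 1 - b := by linarith
  have := (concaveOn_sum_negMulLog_segment_add_sq hx hy).2 (left_mem_Icc.2 zero_le_one)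
    (right_mem_Icc.2 zero_le_one) ha hb hab
  have hy' : ∀ i, x i + 1 * (y i - x i) = y i := fun i ↦ by ring
  have hxy : ∀ i, x i + b * (y i - x i) = (1 - b) * x i + b * y i := fun i ↦ by ring
  simp only [smul_eq_mul, mul_zero, zero_mul, mul_one, add_zero, zero_add, one_pow, hy', hxy,
    zero_pow two_ne_zero] at this
  simp only [PiLp.norm_eq_of_L1, PiLp.sub_apply, PiLp.add_apply, PiLp.smul_apply, smul_eq_mul,
    Real.norm_eq_abs, abs_sub_comm (x _)]
  linarith

end Entropy

lemma EuclideanSpace.norm_toLp_le_one_of_mem_stdSimplex {κ : Type*} [Fintype κ] {v : κ → ℝ}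
    (hv : v ∈ stdSimplex ℝ κ) : ‖WithLp.toLp 2 v‖ ≤ 1 := by
  rw [EuclideanSpace.norm_eq, sqrt_le_one, ← hv.2]
  refine sum_le_sum fun j _ ↦ ?_
  rw [PiLp.toLp_apply, norm_eq_abs, sq_abs]
  exact pow_le_of_le_one (hv.1 j) (mem_Icc_of_mem_stdSimplex hv j).2 two_ne_zero

namespace Matrix

variable {ι κ : Type*} [Fintype ι]

noncomputable def vecMulL1ToL2 (W : Matrix ι κ ℝ) : WithLp 1 (ι → ℝ) →ₗ[ℝ] EuclideanSpace ℝ κ :=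
  (WithLp.linearEquiv 2 ℝ (κ → ℝ)).symm.toLinearMap ∘ₗ W.vecMulLinear ∘ₗ
    (WithLp.linearEquiv 1 ℝ (ι → ℝ)).toLinearMap

lemma vecMulL1ToL2_apply (W : Matrix ι κ ℝ) (x : WithLp 1 (ι → ℝ)) :
    W.vecMulL1ToL2 x = WithLp.toLp 2 (x.ofLp ᵥ* W) := rfl

lemma norm_vecMulL1ToL2_le [Fintype κ] {W : Matrix ι κ ℝ} (hW : ∀ i, W i ∈ stdSimplex ℝ κ)
    (x : WithLp 1 (ι → ℝ)) : ‖W.vecMulL1ToL2 x‖ ≤ ‖x‖ :=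
  calc ‖W.vecMulL1ToL2 x‖ = ‖∑ i, x i • WithLp.toLp 2 (W i)‖ := by
        simp [vecMulL1ToL2_apply, vecMul_eq_sum]
    _ ≤ ∑ i, ‖x i‖ := (norm_sum_le _ _).trans <| sum_le_sum fun i _ ↦ by
        rw [norm_smul]
        exact mul_le_of_le_one_right (norm_nonneg _)
          (EuclideanSpace.norm_toLp_le_one_of_mem_stdSimplex (hW i))
    _ = ‖x‖ := (PiLp.norm_eq_of_L1 x).symm

end Matrix

section ChannelObjective

variable {ι κ : Type*} [Fintype ι] [Fintype κ]

noncomputable def smoothedObjective (W : Matrix ι κ ℝ) (r : ι → ℝ) (ν c : ℝ)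
    (l : EuclideanSpace ℝ κ) (p : ι → ℝ) : ℝ :=
  (∑ j, l j * (∑ i, p i * W i j)) - (∑ i, r i * p i) + ν * (∑ i, -(p i * logb 2 (p i))) - c

variable {W : Matrix ι κ ℝ} {r : ι → ℝ} {ν c : ℝ}

lemma smoothedObjective_ofLp (l : EuclideanSpace ℝ κ) (x : WithLp 1 (ι → ℝ)) :
    smoothedObjective W r ν c l x.ofLp =
      ⟪l, W.vecMulL1ToL2 x⟫ + smoothedObjective W r ν c 0 x.ofLp := by
  simp [smoothedObjective, Matrix.vecMulL1ToL2, EuclideanSpace.inner_eq_star_dotProduct,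
    dotProduct, Matrix.vecMul, mul_comm]
  ring

lemma continuous_smoothedObjective (W : Matrix ι κ ℝ) (r : ι → ℝ) (ν c : ℝ)
    (l : EuclideanSpace ℝ κ) : Continuous (smoothedObjective W r ν c l) := by
  have hlogb : ∀ i, Continuous fun p : ι → ℝ ↦ p i * logb 2 (p i) := fun i ↦ by
    simp only [logb, ← mul_div_assoc]
    exact (continuous_mul_log.comp (continuous_apply i)).div_const _
  unfold smoothedObjective
  fun_prop

lemma IsMaxOn.inner_vecMulL1ToL2_add {D : Set (ι → ℝ)} {l : EuclideanSpace ℝ κ} {q : ι → ℝ}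
    (hq : IsMaxOn (smoothedObjective W r ν c l) D q) :
    IsMaxOn (fun x ↦ ⟪l, W.vecMulL1ToL2 x⟫ + smoothedObjective W r ν c 0 x.ofLp)
      (WithLp.ofLp ⁻¹' D) (WithLp.toLp 1 q) := fun x hx ↦
  calc ⟪l, W.vecMulL1ToL2 x⟫ + smoothedObjective W r ν c 0 x.ofLp
      = smoothedObjective W r ν c l x.ofLp := (smoothedObjective_ofLp l x).symm
    _ ≤ smoothedObjective W r ν c l q := hq hx
    _ = _ := smoothedObjective_ofLp l (WithLp.toLp 1 q)

lemma concaveOn_neg_sum_mul_sub (r : ι → ℝ) (c : ℝ) {s : Set (WithLp 1 (ι → ℝ))}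
    (hs : Convex ℝ s) : ConcaveOn ℝ s fun x ↦ -(∑ i, r i * x i) - c := by
  refine ⟨hs, fun x _ y _ a b _ _ hab ↦ le_of_eq ?_⟩
  simp only [smul_eq_mul, PiLp.add_apply, PiLp.smul_apply, mul_add, mul_sub, mul_neg,
    sum_add_distrib, mul_sum, mul_left_comm (r _)]
  linear_combination (-c) * hab

lemma strongConcaveOn_smoothedObjective (hν : 0 ≤ ν) {D : Set (ι → ℝ)}
    (hDΔ : D ⊆ stdSimplex ℝ ι) (hD : Convex ℝ D) :
    StrongConcaveOn (WithLp.ofLp ⁻¹' D) (ν / log 2)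
      fun x : WithLp 1 (ι → ℝ) ↦ smoothedObjective W r ν c 0 x.ofLp := by
  have hconv := hD.linear_preimage (WithLp.linearEquiv 1 ℝ (ι → ℝ)).toLinearMap
  have hent := (strongConcaveOn_sum_negMulLog (ι := ι)).subset (preimage_mono hDΔ) hconv
  convert (hent.const_mul (div_nonneg hν (log_nonneg one_le_two))).add_concaveOn
    (concaveOn_neg_sum_mul_sub r c hconv) using 1
  · ring
  · ext x
    simp only [smoothedObjective, PiLp.zero_apply, mul_comm, mul_sum, mul_left_comm, zero_mul,
      mul_zero, sum_const_zero, zero_sub, logb, div_eq_mul_inv, sum_neg_distrib, mul_neg,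
      negMulLog, neg_mul, mul_assoc, Pi.add_apply]
    ring

end ChannelObjective

theorem stmt12_general (N M : ℕ) (W : Matrix (Fin N) (Fin M) ℝ)
    (hWnn : ∀ i j, 0 ≤ W i j) (hWrow : ∀ i, ∑ j, W i j = 1)
    (s : Fin N → ℝ) (S : ℝ)
    (r : Fin N → ℝ)
    (ν : ℝ) (hν : 0 < ν)
    -- the feasible set {p ∈ Δ_N : sᵀp = S}, assumed nonempty
    (D : Set (Fin N → ℝ))
    (hD : D = {p | p ∈ stdSimplex ℝ (Fin N) ∧ (∑ i, s i * p i) = S})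
    (hfeas : D.Nonempty)
    -- the smoothed objective and the smoothed dual function G_ν
    (obj : EuclideanSpace ℝ (Fin M) → (Fin N → ℝ) → ℝ)
    (hobj : ∀ lam p, obj lam p =
      (∑ j, lam j * (∑ i, p i * W i j)) - (∑ i, r i * p i) +
        ν * (∑ i, -(p i * Real.logb 2 (p i))) - ν * Real.logb 2 N)
    (Gν : EuclideanSpace ℝ (Fin M) → ℝ)
    (hGν : ∀ lam, Gν lam = sSup {t | ∃ p ∈ D, t = obj lam p}) :
    ∃ pν : EuclideanSpace ℝ (Fin M) → (Fin N → ℝ),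
      -- G_ν is well defined: its defining maximum is attained at the unique maximizer p_ν(λ)
      (∀ lam, pν lam ∈ D ∧ obj lam (pν lam) = Gν lam ∧
        ∀ p ∈ D, obj lam p = Gν lam → p = pν lam) ∧
      -- G_ν is convex
      ConvexOn ℝ Set.univ Gν ∧
      -- G_ν is continuously differentiable with gradient Wᵀ p_ν(λ)
      ContDiff ℝ 1 Gν ∧
      (∀ lam, HasGradientAt Gν
        ((WithLp.equiv 2 (Fin M → ℝ)).symm (fun j => ∑ i, pν lam i * W i j)) lam) ∧
      -- the gradient is Lipschitz continuous with constant 1/ν (Euclidean norm)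
      (∀ lam lam' : EuclideanSpace ℝ (Fin M),
        ‖(WithLp.equiv 2 (Fin M → ℝ)).symm (fun j => ∑ i, pν lam i * W i j) -
            (WithLp.equiv 2 (Fin M → ℝ)).symm (fun j => ∑ i, pν lam' i * W i j)‖ ≤
          (1 / ν) * ‖lam - lam'‖) := by
  have hobj' : obj = smoothedObjective W r ν (ν * logb 2 N) := funext₂ hobj
  subst hobj'
  set A := W.vecMulL1ToL2
  set h := fun x : WithLp 1 (Fin N → ℝ) ↦ smoothedObjective W r ν (ν * logb 2 N) 0 x.ofLp
  have hDc : IsCompact D :=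
    hD ▸ (isCompact_stdSimplex ℝ _).inter_right (isClosed_eq (by fun_prop) continuous_const)
  have hDconv : Convex ℝ D :=
    hD ▸ (convex_stdSimplex ℝ _).inter (convex_hyperplane (dotProductBilin ℝ ℝ s).isLinear S)
  have hh : StrongConcaveOn (WithLp.ofLp ⁻¹' D) ν h :=
    (strongConcaveOn_smoothedObjective hν.le (fun p hp ↦ (hD ▸ hp).1) hDconv).mono
      (le_div_self hν.le (log_pos one_lt_two) (log_two_lt_d9.le.trans (by norm_num)))
  have hA : ∀ x, ‖A x‖ ≤ 1 * ‖x‖ := fun x ↦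
    (one_mul ‖x‖).symm ▸ Matrix.norm_vecMulL1ToL2_le (fun i ↦ ⟨hWnn i, hWrow i⟩) x
  choose q hqD hqmax using fun l ↦
    hDc.exists_isMaxOn hfeas (continuous_smoothedObjective W r ν (ν * logb 2 N) l).continuousOn
  have hmax : ∀ l, WithLp.toLp 1 (q l) ∈ WithLp.ofLp ⁻¹' D ∧
      IsMaxOn (fun x ↦ ⟪l, A x⟫ + h x) (WithLp.ofLp ⁻¹' D) (WithLp.toLp 1 (q l)) := fun l ↦
    ⟨hqD l, (hqmax l).inner_vecMulL1ToL2_add⟩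
  have hG : ∀ l, Gν l = ⟪l, A (WithLp.toLp 1 (q l))⟫ + h (WithLp.toLp 1 (q l)) := fun l ↦
    (hGν l).trans (((hqmax l).sSup_setOf_eq (hqD l)).trans (smoothedObjective_ofLp l _))
  have huniq : ∀ l, ∀ p ∈ D, smoothedObjective W r ν (ν * logb 2 N) l p = Gν l → p = q l :=
    fun l p hp hpG ↦ congrArg WithLp.ofLp (NesterovSmoothing.eq_of_apply_eq hν hh hmax hG hp
      ((smoothedObjective_ofLp l _).symm.trans hpG))
  refine ⟨q, fun l ↦ ⟨hqD l, (smoothedObjective_ofLp l _).trans (hG l).symm, huniq l⟩,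
    NesterovSmoothing.convexOn hmax hG, NesterovSmoothing.contDiff_one hν hA hh hmax hG,
    fun l ↦ NesterovSmoothing.hasGradientAt hν hA hh hmax hG l, fun l l' ↦ ?_⟩
  have := NesterovSmoothing.norm_sub_le hν hA hh hmax l l'
  rwa [one_pow] at this

theorem stmt12 (N M : ℕ) (W : Matrix (Fin N) (Fin M) ℝ)
    (hWnn : ∀ i j, 0 ≤ W i j) (hWrow : ∀ i, ∑ j, W i j = 1)
    (s : Fin N → ℝ) (hs : ∀ i, 0 ≤ s i) (S : ℝ) (hS : 0 ≤ S)
    (r : Fin N → ℝ) (hr : ∀ i, r i = -(∑ j, W i j * Real.logb 2 (W i j)))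
    (ν : ℝ) (hν : 0 < ν)
    -- the feasible set {p ∈ Δ_N : sᵀp = S}, assumed nonempty
    (D : Set (Fin N → ℝ))
    (hD : D = {p | p ∈ stdSimplex ℝ (Fin N) ∧ (∑ i, s i * p i) = S})
    (hfeas : D.Nonempty)
    -- the smoothed objective and the smoothed dual function G_ν
    (obj : EuclideanSpace ℝ (Fin M) → (Fin N → ℝ) → ℝ)
    (hobj : ∀ lam p, obj lam p =
      (∑ j, lam j * (∑ i, p i * W i j)) - (∑ i, r i * p i) +
        ν * (∑ i, -(p i * Real.logb 2 (p i))) - ν * Real.logb 2 N)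
    (Gν : EuclideanSpace ℝ (Fin M) → ℝ)
    (hGν : ∀ lam, Gν lam = sSup {t | ∃ p ∈ D, t = obj lam p}) :
    ∃ pν : EuclideanSpace ℝ (Fin M) → (Fin N → ℝ),
      -- G_ν is well defined: its defining maximum is attained at the unique maximizer p_ν(λ)
      (∀ lam, pν lam ∈ D ∧ obj lam (pν lam) = Gν lam ∧
        ∀ p ∈ D, obj lam p = Gν lam → p = pν lam) ∧
      -- G_ν is convex
      ConvexOn ℝ Set.univ Gν ∧
      -- G_ν is continuously differentiable with gradient Wᵀ p_ν(λ)
      ContDiff ℝ 1 Gν ∧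
      (∀ lam, HasGradientAt Gν
        ((WithLp.equiv 2 (Fin M → ℝ)).symm (fun j => ∑ i, pν lam i * W i j)) lam) ∧
      -- the gradient is Lipschitz continuous with constant 1/ν (Euclidean norm)
      (∀ lam lam' : EuclideanSpace ℝ (Fin M),
        ‖(WithLp.equiv 2 (Fin M → ℝ)).symm (fun j => ∑ i, pν lam i * W i j) -
            (WithLp.equiv 2 (Fin M → ℝ)).symm (fun j => ∑ i, pν lam' i * W i j)‖ ≤
          (1 / ν) * ‖lam - lam'‖) :=
  stmt12_general N M W hWnn hWrow s S r ν hν D hD hfeas obj hobj Gν hGν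
end

section
/- For every k ∈ (0,1), every p ∈ [0,1], and every x ∈ [0, 1−p], | (p+x)·log(p+x) − p·log p | ≤ (log e)/(e·(1−k)) · x^k. -/
/-! With `f u = u log u`, which is convex with `f 0 = f 1 = 0`, superadditivity gives
`f (p + x) - f p ≥ f x`, and convexity on `[p, 1]` (where `p + x` and `1 - x` sit symmetrically)
gives `f (p + x) - f p ≤ -f (1 - x)`. Both `-f x` and `-f (1 - x)` are at most
`x ^ k / (e (1 - k))`: the first by the sharp bound `log y ≤ y ^ ε / (e ε)` at `y = 1 / x`,
`ε = 1 - k`; the second because `-f (1 - x) ≤ min x (1 / e)`. -/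

open Real Set

theorem ConvexOn.map_add_map_le_of_add_eq {𝕜 β : Type*} [Field 𝕜] [LinearOrder 𝕜]
    [IsStrictOrderedRing 𝕜] [AddCommGroup β] [PartialOrder β] [IsOrderedAddMonoid β]
    [Module 𝕜 β] {s : Set 𝕜} {f : 𝕜 → β} (hf : ConvexOn 𝕜 s f) {a b c d : 𝕜}
    (ha : a ∈ s) (hd : d ∈ s) (hb : b ∈ Icc a d) (hc : c ∈ Icc a d) (hbc : b + c = a + d) :
    f b + f c ≤ f a + f d := by
  obtain rfl | had := (hb.1.trans hb.2).eq_or_lt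
  · rw [le_antisymm hb.2 hb.1, le_antisymm hc.2 hc.1]
  have hda : 0 < d - a := sub_pos.2 had
  set t := (b - a) / (d - a)
  have ht₀ : 0 ≤ t := div_nonneg (sub_nonneg.2 hb.1) hda.le
  have ht₁ : 0 ≤ 1 - t := by
    rw [sub_nonneg, div_le_one hda]; linarith [hb.2]
  have hb' : (1 - t) • a + t • d = b := by
    simp only [smul_eq_mul, t]; field_simp; ring
  have hc' : t • a + (1 - t) • d = c := by
    simp only [smul_eq_mul] at hb' ⊢; linear_combination -hb' - hbc
  have h₁ := hf.2 ha hd ht₁ ht₀ (sub_add_cancel 1 t)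
  have h₂ := hf.2 ha hd ht₀ ht₁ (add_sub_cancel t 1)
  rw [hb'] at h₁
  rw [hc'] at h₂
  calc f b + f c ≤ (1 - t) • f a + t • f d + (t • f a + (1 - t) • f d) := add_le_add h₁ h₂
    _ = f a + f d := by module

theorem Real.log_le_rpow_div_exp_one_mul {x ε : ℝ} (hx : 0 ≤ x) (hε : 0 < ε) :
    log x ≤ x ^ ε / (exp 1 * ε) := by
  rcases hx.eq_or_lt with rfl | hx
  · rw [log_zero, zero_rpow hε.ne', zero_div]
  rw [le_div_iff₀ (by positivity), ← mul_assoc, mul_comm _ (exp 1), mul_assoc, mul_comm _ ε,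
    ← log_rpow hx]
  exact exp_one_mul_le_exp.trans (exp_log (rpow_pos_of_pos hx ε)).le

theorem Real.negMulLog_le_rpow_div {k u : ℝ} (hk : k < 1) (hu : 0 ≤ u) :
    negMulLog u ≤ u ^ k / (exp 1 * (1 - k)) := by
  rcases hu.eq_or_lt with rfl | hu
  · rw [negMulLog_zero]
    exact div_nonneg (rpow_nonneg le_rfl k) (mul_pos (exp_pos 1) (sub_pos.2 hk)).le
  have hlog := log_le_rpow_div_exp_one_mul (inv_nonneg.2 hu.le) (sub_pos.2 hk)
  calc negMulLog u = u * log u⁻¹ := by rw [negMulLog, log_inv]; ring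
    _ ≤ u * (u⁻¹ ^ (1 - k) / (exp 1 * (1 - k))) := mul_le_mul_of_nonneg_left hlog hu.le
    _ = u ^ k / (exp 1 * (1 - k)) := by
      rw [inv_rpow hu.le, ← rpow_neg hu.le, neg_sub, rpow_sub_one hu.ne']
      field_simp

theorem Real.negMulLog_one_sub_le_rpow_div {k x : ℝ} (hk₀ : 0 ≤ k) (hk₁ : k < 1) (hx₀ : 0 ≤ x)
    (hx₁ : x ≤ 1) : negMulLog (1 - x) ≤ x ^ k / (exp 1 * (1 - k)) := by
  rcases le_or_gt x (exp (-1)) with hxe | hxe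
  · have hx : x ≤ negMulLog x := by
      rcases hx₀.eq_or_lt with rfl | hx
      · simp
      have hlog : log x ≤ -1 := by simpa using log_le_log hx hxe
      rw [negMulLog]
      nlinarith
    calc negMulLog (1 - x) ≤ 1 - (1 - x) := negMulLog_le_one_sub_self (by linarith)
      _ = x := by ring
      _ ≤ negMulLog x := hx
      _ ≤ x ^ k / (exp 1 * (1 - k)) := negMulLog_le_rpow_div hk₁ hx₀
  · have hk : 0 < 1 - k := sub_pos.2 hk₁
    have hxk : 1 - k ≤ x ^ k := calc
      1 - k ≤ exp (-k) := by linarith [add_one_le_exp (-k)]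
      _ = exp (-1) ^ k := by rw [← exp_mul]; ring_nf
      _ ≤ x ^ k := rpow_le_rpow (exp_pos _).le hxe.le hk₀
    calc negMulLog (1 - x) ≤ (1 - x) ^ (0 : ℝ) / (exp 1 * (1 - 0)) :=
          negMulLog_le_rpow_div zero_lt_one (by linarith)
      _ = (1 - k) / (exp 1 * (1 - k)) := by rw [rpow_zero, sub_zero, mul_one]; field_simp
      _ ≤ x ^ k / (exp 1 * (1 - k)) := by gcongr

theorem Real.mul_log_add_mul_log_le {p x : ℝ} (hp : 0 ≤ p) (hx : 0 ≤ x) :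
    p * log p + x * log x ≤ (p + x) * log (p + x) := by
  rcases hp.eq_or_lt with rfl | hp
  · simp
  rcases hx.eq_or_lt with rfl | hx
  · simp
  have h₁ : log p ≤ log (p + x) := log_le_log hp (by linarith)
  have h₂ : log x ≤ log (p + x) := log_le_log hx (by linarith)
  nlinarith

theorem Real.mul_log_add_sub_mul_log_le_negMulLog_one_sub {p x : ℝ} (hp : 0 ≤ p) (hx : 0 ≤ x)
    (hpx : p + x ≤ 1) : (p + x) * log (p + x) - p * log p ≤ negMulLog (1 - x) := by
  have h := convexOn_mul_log.map_add_map_le_of_add_eq (a := p) (b := p + x) (c := 1 - x) (d := 1)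
    hp (mem_Ici.2 zero_le_one) ⟨by linarith, hpx⟩ ⟨by linarith, by linarith⟩ (by ring)
  simp only [log_one, mul_zero, add_zero] at h
  rw [negMulLog]
  linarith

theorem Real.abs_mul_log_add_sub_mul_log_le {k p x : ℝ} (hk₀ : 0 ≤ k) (hk₁ : k < 1) (hp : 0 ≤ p)
    (hx : 0 ≤ x) (hpx : p + x ≤ 1) :
    |(p + x) * log (p + x) - p * log p| ≤ x ^ k / (exp 1 * (1 - k)) := by
  have hlower := mul_log_add_mul_log_le hp hx
  have hx' := negMulLog_le_rpow_div hk₁ hx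
  have hupper := (mul_log_add_sub_mul_log_le_negMulLog_one_sub hp hx hpx).trans
    (negMulLog_one_sub_le_rpow_div hk₀ hk₁ hx (by linarith))
  rw [negMulLog] at hx'
  rw [abs_le]
  constructor <;> linarith

theorem stmt14_general (k p x : ℝ) (hk0 : 0 < k) (hk1 : k < 1)
    (hp0 : 0 ≤ p) (hx0 : 0 ≤ x) (hx1 : x ≤ 1 - p) :
    |(p + x) * Real.logb 2 (p + x) - p * Real.logb 2 p| ≤
      Real.logb 2 (Real.exp 1) / (Real.exp 1 * (1 - k)) * x ^ k := by
  have hlog2 : 0 < log 2 := log_pos one_lt_two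
  have key := abs_mul_log_add_sub_mul_log_le hk0.le hk1 hp0 hx0 (by linarith)
  calc |(p + x) * logb 2 (p + x) - p * logb 2 p|
      = |(p + x) * log (p + x) - p * log p| / log 2 := by
        simp only [logb, mul_div_assoc', ← sub_div, abs_div, abs_of_pos hlog2]
    _ ≤ x ^ k / (exp 1 * (1 - k)) / log 2 := by gcongr
    _ = logb 2 (exp 1) / (exp 1 * (1 - k)) * x ^ k := by rw [logb, log_exp]; ring

theorem stmt14 (k p x : ℝ) (hk0 : 0 < k) (hk1 : k < 1)
    (hp0 : 0 ≤ p) (hp1 : p ≤ 1) (hx0 : 0 ≤ x) (hx1 : x ≤ 1 - p) :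
    |(p + x) * Real.logb 2 (p + x) - p * Real.logb 2 p| ≤
      Real.logb 2 (Real.exp 1) / (Real.exp 1 * (1 - k)) * x ^ k :=
  stmt14_general k p x hk0 hk1 hp0 hx0 hx1
end

section
/- Let (a_i)_{i≥1} be a nonnegative sequence of real numbers and k ∈ (0,1]. Then ∑_{i≥1} a_i^k ≤ ( ∑_{i≥1} α^i·a_i )^k, where α := 2^{(1/k − 1)} and the inequality is understood in the extended reals [0,∞]. -/
/-!
For `0 < k ≤ 1` the power mean inequality `(u + v) ^ p ≤ 2 ^ (p - 1) (u ^ p + v ^ p)` with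
`p = 1 / k ≥ 1`, applied to `u = x ^ k`, `v = y ^ k`, gives `x ^ k + y ^ k ≤ (α (x + y)) ^ k`
with `α = 2 ^ (1 / k - 1)`. Splitting off the first term and applying this to it and to the
(inductively bounded) rest yields the finite version
`∑_{i<n} b_i ^ k ≤ (∑_{i<n} α ^ (i+1) b_i) ^ k`: each further split costs one more factor
of `α`. The series version follows by taking the supremum over `n`.
-/

open scoped ENNReal
open Finset

namespace ENNReal

theorem rpow_add_rpow_le_rpow_two_rpow_mul_add (x y : ℝ≥0∞) {k : ℝ} (hk0 : 0 < k) (hk1 : k ≤ 1) :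
    x ^ k + y ^ k ≤ ((2 : ℝ≥0∞) ^ (1 / k - 1) * (x + y)) ^ k := by
  have hp : 1 ≤ 1 / k := by rw [le_div_iff₀ hk0]; linarith
  have h := rpow_add_le_mul_rpow_add_rpow (x ^ k) (y ^ k) hp
  rw [← rpow_mul, ← rpow_mul, mul_one_div_cancel hk0.ne', rpow_one, rpow_one] at h
  rwa [← rpow_inv_le_iff hk0, ← one_div]

variable {k : ℝ} {C : ℝ≥0∞}

theorem sum_range_rpow_le_rpow_sum_pow_mul
    (hC : ∀ x y : ℝ≥0∞, x ^ k + y ^ k ≤ (C * (x + y)) ^ k) (b : ℕ → ℝ≥0∞) (n : ℕ) :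
    ∑ i ∈ range n, b i ^ k ≤ (∑ i ∈ range n, C ^ (i + 1) * b i) ^ k := by
  induction n generalizing b with
  | zero => simp
  | succ n ih =>
    rw [sum_range_succ', sum_range_succ', add_comm, add_comm _ (C ^ (0 + 1) * b 0)]
    calc b 0 ^ k + ∑ i ∈ range n, b (i + 1) ^ k
        ≤ b 0 ^ k + (∑ i ∈ range n, C ^ (i + 1) * b (i + 1)) ^ k := by
          gcongr
          exact ih _
      _ ≤ (C * (b 0 + ∑ i ∈ range n, C ^ (i + 1) * b (i + 1))) ^ k := hC _ _
      _ = (C ^ (0 + 1) * b 0 + ∑ i ∈ range n, C ^ (i + 1 + 1) * b (i + 1)) ^ k := by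
          rw [mul_add, mul_sum, zero_add, pow_one]
          congr 2
          exact sum_congr rfl fun i _ => by ring

theorem tsum_rpow_le_rpow_tsum_pow_mul (hk : 0 ≤ k)
    (hC : ∀ x y : ℝ≥0∞, x ^ k + y ^ k ≤ (C * (x + y)) ^ k) (b : ℕ → ℝ≥0∞) :
    ∑' i, b i ^ k ≤ (∑' i, C ^ (i + 1) * b i) ^ k := by
  rw [ENNReal.tsum_eq_iSup_nat]
  refine iSup_le fun n => (sum_range_rpow_le_rpow_sum_pow_mul hC b n).trans ?_
  gcongr
  exact ENNReal.sum_le_tsum _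

end ENNReal

theorem stmt16_general (a : ℕ → ℝ) (k : ℝ) (hk0 : 0 < k) (hk1 : k ≤ 1) :
    ∑' i : ℕ, (ENNReal.ofReal (a (i + 1))) ^ k ≤
      (∑' i : ℕ, ENNReal.ofReal (((2 : ℝ) ^ (1 / k - 1)) ^ (i + 1) * a (i + 1))) ^ k := by
  have hα : ENNReal.ofReal ((2 : ℝ) ^ (1 / k - 1)) = (2 : ℝ≥0∞) ^ (1 / k - 1) := by
    rw [← ENNReal.ofReal_rpow_of_pos two_pos, ENNReal.ofReal_ofNat]
  have hterm (i : ℕ) : ENNReal.ofReal (((2 : ℝ) ^ (1 / k - 1)) ^ (i + 1) * a (i + 1)) =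
      ((2 : ℝ≥0∞) ^ (1 / k - 1)) ^ (i + 1) * ENNReal.ofReal (a (i + 1)) := by
    rw [ENNReal.ofReal_mul (by positivity), ENNReal.ofReal_pow (by positivity), hα]
  simp_rw [hterm]
  exact ENNReal.tsum_rpow_le_rpow_tsum_pow_mul hk0.le
    (fun x y => ENNReal.rpow_add_rpow_le_rpow_two_rpow_mul_add x y hk0 hk1) _

theorem stmt16 (a : ℕ → ℝ) (ha : ∀ i, 0 ≤ a i) (k : ℝ) (hk0 : 0 < k) (hk1 : k ≤ 1) :
    ∑' i : ℕ, (ENNReal.ofReal (a (i + 1))) ^ k ≤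
      (∑' i : ℕ, ENNReal.ofReal (((2 : ℝ) ^ (1 / k - 1)) ^ (i + 1) * a (i + 1))) ^ k :=
  stmt16_general a k hk0 hk1
end
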